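/- arXiv:1208.1671 — 8 statements merged into one kernel-verified Lean document; each statement's English description precedes it below -/
import Mathlib

section
/- Let V be a complex vector space with basis v_1,...,v_n and let q = (q_ij) be nonzero scalars with q_ii = 1 and q_ji = q_ij^{-1}. Suppose a group element g acts on V by g·v_i = Σ_k g^i_k v_k and that this action induces an algebra automorphism of the quantum symmetric algebra S_q(V). Then for each pair i,j with q_ij ≠ 1, one has g^i_k g^j_k = 0 for every k. -/
open FreeAlgebra

/-- The quantum symmetric algebra `S_q(V)`. -/
abbrev SqAlg (n : ℕ) (q : Fin n → Fin n → ℂ) : Type :=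
  RingQuot (fun a b : FreeAlgebra ℂ (Fin n) =>
    ∃ i j : Fin n, a = ι ℂ i * ι ℂ j ∧ b = q i j • (ι ℂ j * ι ℂ i))

/-- The image of the basis vector `v_i` in `S_q(V)`. -/
noncomputable def sqGen {n : ℕ} (q : Fin n → Fin n → ℂ) (i : Fin n) : SqAlg n q :=
  RingQuot.mkAlgHom ℂ _ (ι ℂ i)

/-- If `g` acts on `V` by `g·v_i = ∑ₖ M i k • v_k` and this defines an algebra
automorphism of `S_q(V)`, then for each pair `i, j` with `q_{ij} ≠ 1` one has
`g^i_k g^j_k = 0` for every `k`. -/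
theorem stmt1 (n : ℕ) (q : Fin n → Fin n → ℂ)
    (hq0 : ∀ i j, q i j ≠ 0) (hq1 : ∀ i, q i i = 1)
    (hqinv : ∀ i j, q j i = (q i j)⁻¹)
    (M : Fin n → Fin n → ℂ)
    (haut : ∀ i j : Fin n,
      (∑ k, M i k • sqGen q k) * (∑ l, M j l • sqGen q l) =
        q i j • ((∑ k, M j k • sqGen q k) * (∑ l, M i l • sqGen q l)))
    (i j : Fin n) (hij : q i j ≠ 1) (k : Fin n) :
    M i k * M j k = 0 := by
  -- evaluation at v_k ↦ 1, others ↦ 0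
  set f : FreeAlgebra ℂ (Fin n) →ₐ[ℂ] ℂ :=
    FreeAlgebra.lift ℂ (fun l => if l = k then (1 : ℂ) else 0) with hf
  have hrel : ∀ a b : FreeAlgebra ℂ (Fin n),
      (∃ i j : Fin n, a = ι ℂ i * ι ℂ j ∧ b = q i j • (ι ℂ j * ι ℂ i)) → f a = f b := by
    rintro a b ⟨a', b', rfl, rfl⟩
    simp only [hf, map_mul, map_smul, FreeAlgebra.lift_ι_apply]
    by_cases ha : a' = k <;> by_cases hb : b' = k <;>
      simp [ha, hb, hq1, smul_eq_mul]
  set φ : SqAlg n q →ₐ[ℂ] ℂ := RingQuot.liftAlgHom ℂ ⟨f, hrel⟩ with hφ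
  have hgen : ∀ l, φ (sqGen q l) = if l = k then (1 : ℂ) else 0 := by
    intro l
    rw [hφ, sqGen, RingQuot.liftAlgHom_mkAlgHom_apply, hf, FreeAlgebra.lift_ι_apply]
  have key := congrArg φ (haut i j)
  simp only [map_mul, map_smul, map_sum, hgen, smul_eq_mul, mul_ite, mul_one, mul_zero,
    Finset.sum_ite_eq', Finset.mem_univ, if_true] at key
  -- key : M i k * M j k = q i j * (M j k * M i k)
  have h2 : (1 - q i j) * (M i k * M j k) = 0 := by ring_nf; linear_combination key
  rcases mul_eq_zero.mp h2 with h | h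
  · exact absurd (by linear_combination -h) hij
  · exact h
end

section
/- Suppose G acts linearly on V with basis v_1,...,v_n via g·v_i = Σ_k g^i_k v_k, and suppose this action extends to actions by algebra automorphisms both on the quantum symmetric algebra S_q(V) and on the quantum exterior algebra Λ_q(V). Then for all g ∈ G and all indices i < j, k < l: if g^i_l g^j_k ≠ 0 then q_lk = q_ij, and if g^i_k g^j_l ≠ 0 then q_lk = q_ij^{-1}. -/
open FreeAlgebra

/-- The quantum exterior algebra `Λ_q(V)`. -/
abbrev LambdaAlg (n : ℕ) (q : Fin n → Fin n → ℂ) : Type :=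
  RingQuot (fun a b : FreeAlgebra ℂ (Fin n) =>
    ∃ i j : Fin n, a = ι ℂ i * ι ℂ j ∧ b = (-(q i j)) • (ι ℂ j * ι ℂ i))

/-- The image of `v_i` in `Λ_q(V)`. -/
noncomputable def lamGen {n : ℕ} (q : Fin n → Fin n → ℂ) (i : Fin n) : LambdaAlg n q :=
  RingQuot.mkAlgHom ℂ _ (ι ℂ i)

open Matrix
noncomputable def Xm : Matrix (Fin 4) (Fin 4) ℂ :=
  Matrix.single 0 1 1 + Matrix.single 2 3 1
noncomputable def Ym (c : ℂ) : Matrix (Fin 4) (Fin 4) ℂ :=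
  Matrix.single 0 2 1 + Matrix.single 1 3 c

lemma Xm_mul_Xm : Xm * Xm = 0 := by
  simp [Xm, add_mul, mul_add, Matrix.single_mul_single_of_ne, show (1:Fin 4) ≠ 0 by decide,
    show (1:Fin 4) ≠ 2 by decide, show (3:Fin 4) ≠ 0 by decide, show (3:Fin 4) ≠ 2 by decide]
lemma Ym_mul_Ym (c : ℂ) : Ym c * Ym c = 0 := by
  simp [Ym, add_mul, mul_add, Matrix.single_mul_single_of_ne, show (2:Fin 4) ≠ 0 by decide,
    show (2:Fin 4) ≠ 1 by decide, show (3:Fin 4) ≠ 0 by decide, show (3:Fin 4) ≠ 1 by decide]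
lemma Xm_mul_Ym (c : ℂ) : Xm * Ym c = Matrix.single 0 3 c := by
  simp [Xm, Ym, add_mul, mul_add, Matrix.single_mul_single_of_ne, Matrix.single_mul_single_same,
    show (1:Fin 4) ≠ 0 by decide, show (3:Fin 4) ≠ 0 by decide, show (3:Fin 4) ≠ 1 by decide]
lemma Ym_mul_Xm (c : ℂ) : Ym c * Xm = Matrix.single 0 3 1 := by
  simp [Xm, Ym, add_mul, mul_add, Matrix.single_mul_single_of_ne, Matrix.single_mul_single_same,
    show (2:Fin 4) ≠ 0 by decide, show (3:Fin 4) ≠ 0 by decide, show (3:Fin 4) ≠ 2 by decide]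
open FreeAlgebra in
lemma helper {n : ℕ} (q' : Fin n → Fin n → ℂ) (M : Fin n → Fin n → ℂ)
    (i j k l : Fin n) (hkl : k ≠ l) (hinv : q' l k * q' k l = 1)
    (haut :
      (∑ m, M i m • (RingQuot.mkAlgHom ℂ (fun a b : FreeAlgebra ℂ (Fin n) =>
          ∃ i j : Fin n, a = ι ℂ i * ι ℂ j ∧ b = q' i j • (ι ℂ j * ι ℂ i)) (ι ℂ m))) *
      (∑ m, M j m • (RingQuot.mkAlgHom ℂ _ (ι ℂ m))) =
      q' i j • ((∑ m, M j m • (RingQuot.mkAlgHom ℂ _ (ι ℂ m))) *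
        (∑ m, M i m • (RingQuot.mkAlgHom ℂ _ (ι ℂ m))))) :
    M i k * M j l * q' k l + M i l * M j k
      = q' i j * (M j k * M i l * q' k l + M j l * M i k) := by
  classical
  set f : Fin n → Matrix (Fin 4) (Fin 4) ℂ :=
    fun m => if m = k then Xm else if m = l then Ym (q' k l) else 0 with hf
  have hfk : f k = Xm := by simp [hf]
  have hfl : f l = Ym (q' k l) := by simp [hf, hkl.symm]
  have hrel : ∀ ⦃a b : FreeAlgebra ℂ (Fin n)⦄,
      (∃ i j : Fin n, a = ι ℂ i * ι ℂ j ∧ b = q' i j • (ι ℂ j * ι ℂ i)) →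
      FreeAlgebra.lift ℂ f a = FreeAlgebra.lift ℂ f b := by
    rintro a b ⟨a', b', rfl, rfl⟩
    simp only [_root_.map_mul, _root_.map_smul, lift_ι_apply]
    by_cases ha : a' = k
    · by_cases hb : b' = k
      · subst ha hb; simp [hfk, Xm_mul_Xm]
      by_cases hb' : b' = l
      · subst ha hb'
        simp [hfk, hfl, Xm_mul_Ym, Ym_mul_Xm, Matrix.smul_single, mul_one]
      · subst ha; simp [hf, hb, hb']
    by_cases ha' : a' = l
    · by_cases hb : b' = k
      · subst ha' hb
        simp only [hfk, hfl, Xm_mul_Ym, Ym_mul_Xm, Matrix.smul_single, mul_one]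
        rw [smul_eq_mul, ← hinv]
      by_cases hb' : b' = l
      · subst ha' hb'; simp [hfl, Ym_mul_Ym]
      · subst ha'; simp [hf, hb, hb']
    · simp [hf, ha, ha']
  set φ := RingQuot.liftAlgHom ℂ (s := fun a b : FreeAlgebra ℂ (Fin n) =>
      ∃ i j : Fin n, a = ι ℂ i * ι ℂ j ∧ b = q' i j • (ι ℂ j * ι ℂ i))
      ⟨FreeAlgebra.lift ℂ f, hrel⟩ with hφ
  have hφgen : ∀ m, φ (RingQuot.mkAlgHom ℂ _ (ι ℂ m)) = f m := by
    intro m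
    rw [hφ, RingQuot.liftAlgHom_mkAlgHom_apply]
    simp
  have hsum : ∀ a : Fin n, φ (∑ m, M a m • (RingQuot.mkAlgHom ℂ _ (ι ℂ m)))
      = M a k • Xm + M a l • Ym (q' k l) := by
    intro a
    rw [map_sum]
    have : ∀ m : Fin n, φ (M a m • RingQuot.mkAlgHom ℂ _ (ι ℂ m))
        = (if m = k then M a k • Xm else 0) + (if m = l then M a l • Ym (q' k l) else 0) := by
      intro m
      rw [_root_.map_smul, hφgen]
      by_cases h1 : m = k
      · subst h1; simp [hfk, hkl]
      by_cases h2 : m = l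
      · subst h2; simp [hfl, h1]
      · simp [hf, h1, h2]
    rw [Finset.sum_congr rfl fun m _ => this m, Finset.sum_add_distrib]
    simp
  have E := congrArg φ haut
  rw [_root_.map_mul, _root_.map_smul, _root_.map_mul, hsum, hsum] at E
  rw [mul_add, add_mul, add_mul, mul_add, add_mul, add_mul] at E
  simp only [smul_mul_assoc, Matrix.mul_smul, Xm_mul_Xm, Ym_mul_Ym, Xm_mul_Ym, Ym_mul_Xm,
    smul_zero, smul_smul, zero_add, add_zero, smul_add, Matrix.smul_single, smul_eq_mul,
    mul_one] at E
  have E2 := congrFun (congrFun E 0) 3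
  simp only [Matrix.add_apply, Matrix.single_apply_same] at E2
  linear_combination E2

/-- Suppose `g` acts on `V` by `g·v_i = ∑ₖ M i k • v_k`, and this extends to algebra
automorphisms of both `S_q(V)` and `Λ_q(V)` (i.e. the images of the basis vectors
satisfy the respective defining relations). Then for `i < j` and `k < l`:
if `g^i_l g^j_k ≠ 0` then `q_{lk} = q_{ij}`, and if `g^i_k g^j_l ≠ 0` then
`q_{lk} = q_{ij}⁻¹`. -/
theorem stmt3 (n : ℕ) (q : Fin n → Fin n → ℂ)
    (hq0 : ∀ i j, q i j ≠ 0) (hq1 : ∀ i, q i i = 1)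
    (hqinv : ∀ i j, q j i = (q i j)⁻¹)
    (M : Fin n → Fin n → ℂ)
    (hautS : ∀ i j : Fin n,
      (∑ k, M i k • sqGen q k) * (∑ l, M j l • sqGen q l) =
        q i j • ((∑ k, M j k • sqGen q k) * (∑ l, M i l • sqGen q l)))
    (hautL : ∀ i j : Fin n,
      (∑ k, M i k • lamGen q k) * (∑ l, M j l • lamGen q l) =
        (-(q i j)) • ((∑ k, M j k • lamGen q k) * (∑ l, M i l • lamGen q l)))
    (i j k l : Fin n) (hij : i < j) (hkl : k < l) :
    (M i l * M j k ≠ 0 → q l k = q i j) ∧ (M i k * M j l ≠ 0 → q l k = (q i j)⁻¹) := by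
  classical
  have hne : k ≠ l := ne_of_lt hkl
  have hQ0 : q k l ≠ 0 := hq0 k l
  have h1 := helper q M i j k l hne
    (by rw [hqinv]; exact inv_mul_cancel₀ hQ0) (hautS i j)
  have h2 := helper (fun a b => -(q a b)) M i j k l hne
    (by simp only [neg_mul_neg]; rw [hqinv]; exact inv_mul_cancel₀ hQ0) (hautL i j)
  simp only [neg_mul, mul_neg, neg_neg] at h2
  constructor
  · intro hA
    have h3 : (M i l * M j k) * (q i j * q k l - 1) = 0 := by linear_combination -(h1 + h2) / 2
    rcases mul_eq_zero.mp h3 with h | h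
    · exact absurd h hA
    · rw [hqinv k l]
      exact inv_eq_of_mul_eq_one_left (by linear_combination h)
  · intro hB
    have h3 : (M i k * M j l) * (q k l - q i j) = 0 := by linear_combination (h1 - h2) / 2
    rcases mul_eq_zero.mp h3 with h | h
    · exact absurd h hB
    · rw [hqinv k l, sub_eq_zero.mp h]
end

section
/- Let n ≥ 3 and let S_n act on an n-dimensional complex vector space V by permuting a basis v_1,...,v_n. Let q = (q_ij) be nonzero scalars with q_ii = 1 and q_ji = q_ij^{-1}. If the permutation action of S_n extends to an action by algebra automorphisms of the quantum symmetric algebra S_q(V), then either q_ij = 1 for all i,j, or q_ij = −1 for all i ≠ j. -/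
open FreeAlgebra

set_option maxHeartbeats 1000000 in
lemma sqGen_smul_cancel {n : ℕ} (q : Fin n → Fin n → ℂ)
    (hq0 : ∀ i j, q i j ≠ 0) (hq1 : ∀ i, q i i = 1)
    (hqinv : ∀ i j, q j i = (q i j)⁻¹) (a b : Fin n) (hab : a ≠ b)
    (s t : ℂ) (h : s • (sqGen q a * sqGen q b) = t • (sqGen q a * sqGen q b)) :
    s = t := by
  classical
  set c : ℂ := q b a with hc
  set X : Module.End ℂ (Polynomial ℂ) := LinearMap.mulLeft ℂ Polynomial.X with hX
  set Y : Module.End ℂ (Polynomial ℂ) :=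
    (Polynomial.aeval (R := ℂ) (c • Polynomial.X)).toLinearMap with hY
  have hYX : Y * X = c • (X * Y) := by
    apply LinearMap.ext; intro p
    simp only [hX, hY, Module.End.mul_apply, LinearMap.smul_apply,
      LinearMap.mulLeft_apply, AlgHom.toLinearMap_apply, map_mul,
      Polynomial.aeval_X, smul_mul_assoc]
  have hXY : X * Y = q a b • (Y * X) := by
    rw [hYX, smul_smul, hc, hqinv a b, mul_inv_cancel₀ (hq0 a b), one_smul]
  set g : Fin n → Module.End ℂ (Polynomial ℂ) :=
    fun i => if i = a then X else if i = b then Y else 0 with hg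
  have gva : g a = X := if_pos rfl
  have gvb : g b = Y := by
    show (if b = a then X else if b = b then Y else 0) = Y
    rw [if_neg (Ne.symm hab)]
    exact if_pos rfl
  have gvo : ∀ i, i ≠ a → i ≠ b → g i = 0 := by
    intro i h1 h2
    show (if i = a then X else if i = b then Y else 0) = 0
    rw [if_neg h1, if_neg h2]
  have key : ∀ i j, g i * g j = q i j • (g j * g i) := by
    intro i j
    by_cases hia : i = a
    · by_cases hja : j = a
      · rw [hia, hja, hq1, one_smul]
      · by_cases hjb : j = b
        · rw [hia, hjb, gva, gvb]; exact hXY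
        · rw [gvo j hja hjb, mul_zero, zero_mul, smul_zero]
    · by_cases hib : i = b
      · by_cases hja : j = a
        · rw [hib, hja, gva, gvb]; exact hYX
        · by_cases hjb : j = b
          · rw [hib, hjb, hq1, one_smul]
          · rw [gvo j hja hjb, mul_zero, zero_mul, smul_zero]
      · rw [gvo i hia hib, zero_mul, mul_zero, smul_zero]
  set F : FreeAlgebra ℂ (Fin n) →ₐ[ℂ] Module.End ℂ (Polynomial ℂ) :=
    FreeAlgebra.lift ℂ g with hF
  have hrel : ∀ ⦃x y : FreeAlgebra ℂ (Fin n)⦄,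
      (fun u v : FreeAlgebra ℂ (Fin n) =>
        ∃ i j : Fin n, u = ι ℂ i * ι ℂ j ∧ v = q i j • (ι ℂ j * ι ℂ i)) x y →
      F x = F y := by
    rintro x y ⟨i, j, rfl, rfl⟩
    simp only [map_mul, map_smul, hF, FreeAlgebra.lift_ι_apply]
    exact key i j
  set φ : SqAlg n q →ₐ[ℂ] Module.End ℂ (Polynomial ℂ) :=
    RingQuot.liftAlgHom ℂ ⟨F, hrel⟩ with hφ
  have h1 : φ (sqGen q a * sqGen q b) = X * Y := by
    rw [map_mul]
    have e1 : φ (sqGen q a) = X := by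
      rw [sqGen, hφ, RingQuot.liftAlgHom_mkAlgHom_apply, hF,
        FreeAlgebra.lift_ι_apply, gva]
    have e2 : φ (sqGen q b) = Y := by
      rw [sqGen, hφ, RingQuot.liftAlgHom_mkAlgHom_apply, hF,
        FreeAlgebra.lift_ι_apply, gvb]
    rw [e1, e2]
  have h2 : s • (X * Y) = t • (X * Y) := by
    have e3 : φ (s • (sqGen q a * sqGen q b)) = s • (X * Y) := by
      rw [map_smul, h1]
    have e4 : φ (t • (sqGen q a * sqGen q b)) = t • (X * Y) := by
      rw [map_smul, h1]
    rw [← e3, ← e4, h]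
  have h3 := LinearMap.congr_fun h2 (1 : Polynomial ℂ)
  have h4 : (X * Y) (1 : Polynomial ℂ) = Polynomial.X := by
    simp [hX, hY, Module.End.mul_apply]
  rw [LinearMap.smul_apply, LinearMap.smul_apply, h4] at h3
  have e : ∀ u : ℂ, ((u • (Polynomial.X : Polynomial ℂ)).coeff 1) = u := by
    intro u
    rw [Polynomial.coeff_smul, Polynomial.coeff_X_one, smul_eq_mul, mul_one]
  have h6 : ((s • (Polynomial.X : Polynomial ℂ)).coeff 1)
      = ((t • (Polynomial.X : Polynomial ℂ)).coeff 1) :=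
    congrArg (fun p : Polynomial ℂ => p.coeff 1) h3
  rw [e, e] at h6
  exact h6

/-- Let `n ≥ 3` and let `S_n` act on `V` by permuting the basis `v_0, …, v_{n-1}`.
If this action extends to an action by algebra automorphisms of `S_q(V)` (i.e.
`v_{σ(i)} v_{σ(j)} = q_{ij} v_{σ(j)} v_{σ(i)}` in `S_q(V)` for all `σ, i, j`), then
either `q_{ij} = 1` for all `i, j`, or `q_{ij} = −1` for all `i ≠ j`. -/
theorem stmt9 (n : ℕ) (hn : 3 ≤ n) (q : Fin n → Fin n → ℂ)
    (hq0 : ∀ i j, q i j ≠ 0) (hq1 : ∀ i, q i i = 1)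
    (hqinv : ∀ i j, q j i = (q i j)⁻¹)
    (haut : ∀ (σ : Equiv.Perm (Fin n)) (i j : Fin n),
      sqGen q (σ i) * sqGen q (σ j) = q i j • (sqGen q (σ j) * sqGen q (σ i))) :
    (∀ i j, q i j = 1) ∨ (∀ i j, i ≠ j → q i j = -1) := by
  classical
  have hinv : ∀ (σ : Equiv.Perm (Fin n)) (i j : Fin n), q (σ i) (σ j) = q i j := by
    intro σ i j
    by_cases hij : i = j
    · subst hij; rw [hq1, hq1]
    · have h1 := haut σ i j
      have h2 := haut 1 (σ i) (σ j)
      simp only [Equiv.Perm.one_apply] at h2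
      have hσ : σ j ≠ σ i := fun h => hij ((σ.injective h).symm)
      exact sqGen_smul_cancel q hq0 hq1 hqinv (σ j) (σ i) hσ _ _ (h2.symm.trans h1)
  have hall : ∀ i j k l : Fin n, i ≠ j → k ≠ l → q i j = q k l := by
    intro i j k l hij hkl
    set σ₁ : Equiv.Perm (Fin n) := Equiv.swap i k with hσ₁
    have h1 : σ₁ i = k := Equiv.swap_apply_left i k
    have hj'k : σ₁ j ≠ k := by
      rw [← h1]; exact fun h => hij ((σ₁.injective h).symm)
    set σ₂ : Equiv.Perm (Fin n) := Equiv.swap (σ₁ j) l with hσ₂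
    have h2 : σ₂ k = k := Equiv.swap_apply_of_ne_of_ne hj'k.symm hkl
    have h3 : σ₂ (σ₁ j) = l := Equiv.swap_apply_left _ _
    have h4 := hinv (σ₂ * σ₁) i j
    simp only [Equiv.Perm.mul_apply, h1, h2, h3] at h4
    exact h4.symm
  have hsq : ∀ i j : Fin n, i ≠ j → q i j = 1 ∨ q i j = -1 := by
    intro i j hij
    have h1 : q j i = q i j := hall j i i j (Ne.symm hij) hij
    have h2 : q i j * q i j = 1 := by
      calc q i j * q i j = q i j * q j i := by rw [h1]
        _ = 1 := by rw [hqinv i j, mul_inv_cancel₀ (hq0 i j)]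
    exact mul_self_eq_one_iff.mp h2
  set a : Fin n := ⟨0, by omega⟩ with ha
  set b : Fin n := ⟨1, by omega⟩ with hb
  have hab : a ≠ b := by simp [ha, hb, Fin.ext_iff]
  rcases hsq a b hab with h | h
  · left
    intro i j
    by_cases hij : i = j
    · subst hij; exact hq1 i
    · rw [hall i j a b hij hab, h]
  · right
    intro i j hij
    rw [hall i j a b hij hab, h]
end

section
/- Let T_n be the group with generators t_1,...,t_{n-1}, z and relations z² = 1, t_r² = 1, t_r t_s = t_s t_r z for |r−s| > 1, t_r t_{r+1} t_r = t_{r+1} t_r t_{r+1}, and z t_r = t_r z. For distinct r,s ∈ {1,...,n} define [r s] ∈ T_n recursively by [r, r+1] := t_r, [r s] := t_r [r+1, s] t_r z for r < s−1, and [r s] := [s r] z for r > s. Then for all pairwise distinct r, r', s with all of r,r',s distinct: [r s][s r'] z = [r r'][r s] = [r' s][r r'] z. -/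
/-- Generators of the Schur covering group `T_n` of `S_n`:
`Sum.inl r` is the generator `t_r` (for `0 ≤ r < n-1`, lifting the transposition
`(r, r+1)`), and `Sum.inr ()` is the central generator `z`. -/
abbrev TGen (n : ℕ) := Sum (Fin (n - 1)) Unit

/-- The defining relators of `T_n`: `z² = 1`, `t_r² = 1`, `t_r t_s = t_s t_r z` for
`|r − s| > 1`, the braid relations `t_r t_{r+1} t_r = t_{r+1} t_r t_{r+1}`, and
`z t_r = t_r z`. -/
def TnRels (n : ℕ) : Set (FreeGroup (TGen n)) :=
  {w | w = (FreeGroup.of (Sum.inr () : TGen n)) ^ 2 ∨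
    (∃ r : Fin (n - 1), w = (FreeGroup.of (Sum.inl r : TGen n)) ^ 2) ∨
    (∃ r s : Fin (n - 1), ((r : ℕ) + 1 < (s : ℕ) ∨ (s : ℕ) + 1 < (r : ℕ)) ∧
      w = FreeGroup.of (Sum.inl r : TGen n) * FreeGroup.of (Sum.inl s : TGen n) *
        (FreeGroup.of (Sum.inl s : TGen n) * FreeGroup.of (Sum.inl r : TGen n) *
          FreeGroup.of (Sum.inr () : TGen n))⁻¹) ∨
    (∃ r s : Fin (n - 1), (s : ℕ) = (r : ℕ) + 1 ∧
      w = FreeGroup.of (Sum.inl r : TGen n) * FreeGroup.of (Sum.inl s : TGen n) *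
          FreeGroup.of (Sum.inl r : TGen n) *
        (FreeGroup.of (Sum.inl s : TGen n) * FreeGroup.of (Sum.inl r : TGen n) *
          FreeGroup.of (Sum.inl s : TGen n))⁻¹) ∨
    (∃ r : Fin (n - 1),
      w = FreeGroup.of (Sum.inr () : TGen n) * FreeGroup.of (Sum.inl r : TGen n) *
        (FreeGroup.of (Sum.inl r : TGen n) * FreeGroup.of (Sum.inr () : TGen n))⁻¹)}

/-- The Schur covering group `T_n` of the symmetric group `S_n`. -/
abbrev Tn (n : ℕ) := PresentedGroup (TnRels n)

/-- The central element `z` of `T_n`. -/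
def tz (n : ℕ) : Tn n := PresentedGroup.of (Sum.inr ())

/-- The generator `t_r` of `T_n` (indexed from `0`; junk value `1` if `r ≥ n-1`). -/
def tt (n : ℕ) (r : ℕ) : Tn n :=
  if h : r < n - 1 then PresentedGroup.of (Sum.inl ⟨r, h⟩) else 1

/-- The distinguished lift `[r s] ∈ T_n` of the transposition `(r s)` (0-indexed),
defined recursively by `[r, r+1] = t_r`, `[r s] = t_r [r+1, s] t_r z` for
`r + 1 < s`, and `[r s] = [s r] z` for `r > s`. -/
def bk (n : ℕ) (r s : ℕ) : Tn n :=
  if _ : r + 1 = s then tt n r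
  else if _ : r + 1 < s then tt n r * bk n (r + 1) s * tt n r * tz n
  else if _ : s < r then bk n s r * tz n
  else 1
termination_by 2 * (max r s - min r s) + (r - s)
decreasing_by all_goals omega


namespace SchurAux
variable {n : ℕ}

lemma mk_rel {w : FreeGroup (TGen n)} (h : w ∈ TnRels n) :
    (PresentedGroup.mk (TnRels n) w : Tn n) = 1 := by
  exact (QuotientGroup.eq_one_iff w).mpr (Subgroup.subset_normalClosure h)

lemma of_eq (x : TGen n) : (PresentedGroup.of x : Tn n) = PresentedGroup.mk _ (FreeGroup.of x) := rfl

lemma z2 : tz n * tz n = 1 := by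
  have := mk_rel (n := n) (w := (FreeGroup.of (Sum.inr () : TGen n)) ^ 2) (Or.inl rfl)
  simpa [tz, of_eq, pow_two] using this

lemma t2 (r : ℕ) : tt n r * tt n r = 1 := by
  unfold tt
  split
  · rename_i h
    have := mk_rel (n := n) (w := (FreeGroup.of (Sum.inl ⟨r, h⟩ : TGen n)) ^ 2)
      (Or.inr (Or.inl ⟨⟨r, h⟩, rfl⟩))
    simpa [of_eq, pow_two] using this
  · simp

lemma zt (r : Fin (n-1)) : tz n * PresentedGroup.of (Sum.inl r) =
    (PresentedGroup.of (Sum.inl r) : Tn n) * tz n := by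
  have := mk_rel (n := n) (Or.inr (Or.inr (Or.inr (Or.inr ⟨r, rfl⟩))))
  simp only [map_mul, map_inv, mul_inv_eq_one] at this
  simpa [of_eq, tz] using this

lemma zc (g : Tn n) : tz n * g = g * tz n := by
  induction g using PresentedGroup.induction_on with
  | H w =>
    induction w using FreeGroup.induction_on with
    | C1 => simp
    | of x =>
      cases x with
      | inl r => exact zt r
      | inr u => rfl
    | inv_of x ih =>
      rw [map_inv]; exact Commute.inv_right ih
    | mul a b iha ihb =>
      rw [map_mul, ← mul_assoc, iha, mul_assoc, ihb, mul_assoc]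

lemma tcomm {r s : ℕ} (hrs : r + 1 < s) (hs : s < n - 1) :
    tt n r * tt n s = tt n s * tt n r * tz n := by
  have hr : r < n - 1 := by omega
  have := mk_rel (n := n) (Or.inr (Or.inr (Or.inl ⟨⟨r, hr⟩, ⟨s, hs⟩, Or.inl hrs, rfl⟩)))
  simp only [map_mul, map_inv, mul_inv_eq_one] at this
  simp only [tt, dif_pos hr, dif_pos hs, of_eq]
  rw [this]
  rfl

lemma tbraid {r : ℕ} (h : r + 1 < n - 1) :
    tt n r * tt n (r+1) * tt n r = tt n (r+1) * tt n r * tt n (r+1) := by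
  have hr : r < n - 1 := by omega
  have := mk_rel (n := n) (Or.inr (Or.inr (Or.inr (Or.inl ⟨⟨r, hr⟩, ⟨r+1, h⟩, rfl, rfl⟩))))
  simp only [map_mul, map_inv, mul_inv_eq_one] at this
  simp only [tt, dif_pos hr, dif_pos h, of_eq]
  rw [this]

-- z simp lemmas
lemma zz (g : Tn n) : tz n * (tz n * g) = g := by rw [← mul_assoc, z2, one_mul]
lemma zmv (a b : Tn n) : a * (tz n * b) = tz n * (a * b) := by
  rw [← mul_assoc, ← zc, mul_assoc]
lemma zmv' (a : Tn n) : a * tz n = tz n * a := (zc a).symm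
lemma tts (r : ℕ) (g : Tn n) : tt n r * (tt n r * g) = g := by rw [← mul_assoc, t2, one_mul]

lemma bk_adj (r : ℕ) : bk n r (r+1) = tt n r := by rw [bk]; simp
lemma bk_step {r s : ℕ} (h : r + 1 < s) :
    bk n r s = tt n r * bk n (r+1) s * tt n r * tz n := by
  rw [bk]; rw [dif_neg (by omega), dif_pos h]
lemma bk_gt {r s : ℕ} (h : s < r) : bk n r s = bk n s r * tz n := by
  rw [bk]; rw [dif_neg (by omega), dif_neg (by omega), dif_pos h]
lemma bk_ne {r s : ℕ} (h : r ≠ s) : bk n r s = bk n s r * tz n := by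
  rcases Nat.lt_or_ge r s with hlt | hge
  · rw [bk_gt hlt, mul_assoc, z2, mul_one]
  · exact bk_gt (by omega)

/-- swap `k ↔ k+1` -/
def sw (k i : ℕ) : ℕ := if i = k then k + 1 else if i = k + 1 then k else i
/-- swap `a ↔ b` -/
def swp (a b i : ℕ) : ℕ := if i = a then b else if i = b then a else i

lemma sw_self (k : ℕ) : sw k k = k + 1 := by simp [sw]
lemma sw_succ (k : ℕ) : sw k (k+1) = k := by unfold sw; split_ifs <;> omega
lemma sw_other {k i : ℕ} (h1 : i ≠ k) (h2 : i ≠ k + 1) : sw k i = i := by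
  unfold sw; split_ifs <;> omega

lemma tcomm' {r s : ℕ} (h : r + 1 < s ∨ s + 1 < r) (hr : r < n - 1) (hs : s < n - 1) :
    tt n r * tt n s = tt n s * tt n r * tz n := by
  rcases h with h | h
  · exact tcomm h hs
  · have := tcomm h hr
    rw [this, mul_assoc, z2, mul_one]

lemma tconj {r s : ℕ} (h : r + 1 < s ∨ s + 1 < r) (hr : r < n - 1) (hs : s < n - 1) :
    tt n s * tt n r * tt n s = tt n r * tz n := by
  have h2 := tcomm' (Or.symm h) hs hr
  rw [h2, mul_assoc, mul_assoc, zc, tts]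

lemma conj_push {a x y : Tn n} (ha : a * a = 1) (h : a * x * a = y) (g : Tn n) :
    a * (x * g) = y * (a * g) := by
  have hx : a * x = y * a := by rw [← h, mul_assoc, mul_assoc, ha, mul_one]
  rw [← mul_assoc, hx, mul_assoc]

lemma tcomm_push {r s : ℕ} (h : r + 1 < s ∨ s + 1 < r) (hr : r < n - 1) (hs : s < n - 1)
    (g : Tn n) : tt n s * (tt n r * g) = tt n r * (tz n * (tt n s * g)) := by
  rw [conj_push (t2 s) (tconj h hr hs) g, mul_assoc]

lemma tbraid_push {r : ℕ} (h : r + 1 < n - 1) (g : Tn n) :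
    tt n (r+1) * (tt n r * (tt n (r+1) * g)) =
      tt n r * (tt n (r+1) * (tt n r * g)) := by
  have hb := (tbraid h).symm
  rw [← mul_assoc, ← mul_assoc, hb, mul_assoc, mul_assoc]

lemma conj_tt : ∀ d k r s : ℕ, k < n - 1 → s < n → s = r + d + 1 →
    tt n k * bk n r s * tt n k = bk n (sw k r) (sw k s) * tz n := by
  intro d
  induction d using Nat.strong_induction_on with
  | _ d IH =>
  intro k r s hk hs hd
  by_cases hkr : k = r
  · subst hkr
    rcases Nat.eq_zero_or_pos d with hd0 | hd0
    · -- A : k = r, s = r + 1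
      have hs1 : s = k + 1 := by omega
      subst hs1
      rw [sw_self, sw_succ, bk_adj, bk_gt (Nat.lt_succ_self k), bk_adj]
      simp only [mul_assoc, tts, t2, z2, mul_one, one_mul]
    · -- B : k = r, s > r + 1
      rw [sw_self, sw_other (by omega) (by omega), bk_step (by omega : k + 1 < s)]
      simp only [mul_assoc, tts, zmv, t2, mul_one]
  by_cases hk1r : k + 1 = r
  · -- C : k + 1 = r
    subst hk1r
    rw [sw_succ, sw_other (by omega) (by omega), bk_step (show k + 1 < s by omega)]
    simp only [mul_assoc, z2, mul_one]
  by_cases hkr1 : k = r + 1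
  · subst hkr1
    rcases Nat.lt_or_ge d 2 with hd2 | hd2
    · rcases Nat.lt_one_iff.mp (by omega : d - 1 < 1) |>.symm ▸ (by omega : d = 0 ∨ d = 1) with hd0 | hd0
      · -- D : k = r + 1, s = r + 1 (braid)
        have hs1 : s = r + 1 := by omega
        subst hs1
        rw [show sw (r+1) r = r from sw_other (by omega) (by omega), sw_self,
          bk_adj, bk_step (show r + 1 < r + 1 + 1 by omega), bk_adj]
        simp only [mul_assoc, z2, mul_one]
        simpa [mul_assoc] using (tbraid hk).symm
      · -- E : k = r + 1, s = r + 2  (ABABA = B)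
        have hs1 : s = r + 1 + 1 := by omega
        subst hs1
        rw [show sw (r+1) r = r from sw_other (by omega) (by omega),
          show sw (r+1) (r+1+1) = r + 1 from sw_succ (r+1),
          bk_step (show r + 1 < r + 1 + 1 by omega), bk_adj, bk_adj]
        simp only [mul_assoc, zmv, zmv', zz, tbraid_push hk, tts, t2, mul_one]
    · -- F : k = r + 1, s ≥ r + 3
      rw [show sw (r+1) r = r from sw_other (by omega) (by omega),
        show sw (r+1) s = s from sw_other (by omega) (by omega),
        bk_step (show r + 1 < s by omega), bk_step (show r + 1 + 1 < s by omega)]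
      have IH2 : tt n r * bk n (r+1+1) s * tt n r = bk n (r+1+1) s * tz n := by
        have := IH (d-2) (by omega) r (r+1+1) s (by omega) hs (by omega)
        rwa [sw_other (by omega) (by omega), sw_other (by omega) (by omega)] at this
      have pY : ∀ g, tt n r * (bk n (r+1+1) s * g) =
          bk n (r+1+1) s * (tz n * (tt n r * g)) := by
        intro g; rw [conj_push (t2 r) IH2 g, mul_assoc]
      simp only [mul_assoc, zmv, zmv', zz, z2, mul_one]
      rw [tbraid_push hk, pY, ← tbraid_push hk]
      simp only [mul_assoc, t2, tts, mul_one, zmv, zmv', zz, z2, one_mul]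
  have hout : k + 1 < r ∨ r + 1 < k := by omega
  rcases Nat.eq_zero_or_pos d with hd0 | hd0
  · -- G : comm, s = r + 1
    have hs1 : s = r + 1 := by omega
    subst hs1
    have hr : r < n - 1 := by omega
    rw [sw_other (by omega) (by omega), sw_other (by omega) (by omega), bk_adj]
    exact tconj (by omega) hr hk
  · -- H : comm, s ≥ r + 2
    have hu : r + 1 < sw k s := by unfold sw; split_ifs <;> omega
    have IH1 : tt n k * bk n (r+1) s * tt n k = bk n (r+1) (sw k s) * tz n := by
      have := IH (d-1) (by omega) k (r+1) s hk hs (by omega)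
      rwa [sw_other (by omega) (by omega)] at this
    have pX : ∀ g, tt n k * (bk n (r+1) s * g) =
        bk n (r+1) (sw k s) * (tz n * (tt n k * g)) := by
      intro g; rw [conj_push (t2 k) IH1 g, mul_assoc]
    have pB : ∀ g, tt n k * (tt n r * g) = tt n r * (tz n * (tt n k * g)) :=
      tcomm_push (by omega) (by omega) hk
    rw [sw_other (by omega) (by omega), bk_step (show r + 1 < s by omega), bk_step hu]
    simp only [mul_assoc, pB, pX, zmv, zmv', zz, z2, tts, t2, one_mul, mul_one]

lemma zinv : (tz n)⁻¹ = tz n := inv_eq_of_mul_eq_one_right z2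
lemma ttinv (r : ℕ) : (tt n r)⁻¹ = tt n r := inv_eq_of_mul_eq_one_right (t2 r)

lemma conj_tt' {k r s : ℕ} (hk : k < n - 1) (hr : r < n) (hs : s < n) (hrs : r ≠ s) :
    tt n k * bk n r s * tt n k = bk n (sw k r) (sw k s) * tz n := by
  rcases Nat.lt_or_ge r s with h | h
  · exact conj_tt (s - r - 1) k r s hk hs (by omega)
  · have h' : s < r := by omega
    have base : tt n k * (bk n s r * tt n k) = bk n (sw k s) (sw k r) * tz n := by
      rw [← mul_assoc]; exact conj_tt (r - s - 1) k s r hk hr (by omega)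
    have hsw : sw k r ≠ sw k s := by unfold sw; split_ifs <;> omega
    rw [bk_gt h', bk_ne hsw]
    simp only [mul_assoc, zmv, zmv', zz, z2, mul_one, base]

lemma push_of_conj {a x y : Tn n} (h : a * x * a⁻¹ = y) (g : Tn n) :
    a * (x * g) = y * (a * g) := by
  have hx : a * x = y * a := by rw [← h, mul_assoc, inv_mul_cancel, mul_one]
  rw [← mul_assoc, hx, mul_assoc]

lemma conj_bk : ∀ e a b, b = a + e + 1 → b < n → ∀ r s : ℕ, r < n → s < n → r ≠ s →
    bk n a b * bk n r s * (bk n a b)⁻¹ = bk n (swp a b r) (swp a b s) * tz n := by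
  intro e
  induction e with
  | zero =>
    intro a b hb hbn r s hr hs hrs
    have hb1 : b = a + 1 := by omega
    subst hb1
    rw [show swp a (a+1) r = sw a r from by unfold swp sw; split_ifs <;> omega,
      show swp a (a+1) s = sw a s from by unfold swp sw; split_ifs <;> omega,
      bk_adj, ttinv]
    exact conj_tt' (by omega) hr hs hrs
  | succ e ih =>
    intro a b hb hbn r s hr hs hrs
    have ha : a < n - 1 := by omega
    have hswr : sw a r < n := by unfold sw; split_ifs <;> omega
    have hsws : sw a s < n := by unfold sw; split_ifs <;> omega
    have hswrs : sw a r ≠ sw a s := by unfold sw; split_ifs <;> omega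
    rw [mul_inv_eq_iff_eq_mul]
    have p1 : ∀ g, tt n a * (bk n r s * g) =
        bk n (sw a r) (sw a s) * (tz n * (tt n a * g)) := by
      intro g
      rw [conj_push (t2 a) (conj_tt' ha hr hs hrs) g, mul_assoc]
    have p1' : tt n a * bk n r s = bk n (sw a r) (sw a s) * (tz n * tt n a) := by
      have := p1 1; simpa using this
    have p2 : ∀ g, bk n (a+1) b * (bk n (sw a r) (sw a s) * g) =
        bk n (swp (a+1) b (sw a r)) (swp (a+1) b (sw a s)) * (tz n * (bk n (a+1) b * g)) := by
      intro g
      rw [push_of_conj (ih (a+1) b (by omega) hbn (sw a r) (sw a s) hswr hsws hswrs) g,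
        mul_assoc]
    have hswr2 : swp (a+1) b (sw a r) < n := by unfold swp; split_ifs <;> omega
    have hsws2 : swp (a+1) b (sw a s) < n := by unfold swp; split_ifs <;> omega
    have hswrs2 : swp (a+1) b (sw a r) ≠ swp (a+1) b (sw a s) := by
      unfold swp; split_ifs <;> omega
    have p3 : ∀ g, tt n a * (bk n (swp (a+1) b (sw a r)) (swp (a+1) b (sw a s)) * g) =
        bk n (sw a (swp (a+1) b (sw a r))) (sw a (swp (a+1) b (sw a s))) *
          (tz n * (tt n a * g)) := by
      intro g
      rw [conj_push (t2 a) (conj_tt' ha hswr2 hsws2 hswrs2) g, mul_assoc]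
    have e1 : sw a (swp (a+1) b (sw a r)) = swp a b r := by
      unfold sw swp; split_ifs <;> omega
    have e2 : sw a (swp (a+1) b (sw a s)) = swp a b s := by
      unfold sw swp; split_ifs <;> omega
    rw [bk_step (show a + 1 < b by omega)]
    simp only [mul_assoc, p1, p1', p2, p3, e1, e2, zmv, zmv', zz, z2, tts, t2,
      one_mul, mul_one]

lemma conj_bk_ne {a b r s : ℕ} (ha : a < n) (hb : b < n) (hab : a ≠ b)
    (hr : r < n) (hs : s < n) (hrs : r ≠ s) :
    bk n a b * bk n r s * (bk n a b)⁻¹ = bk n (swp a b r) (swp a b s) * tz n := by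
  rcases Nat.lt_or_ge a b with h | h
  · exact conj_bk (b - a - 1) a b (by omega) hb r s hr hs hrs
  · have h' : b < a := by omega
    have base : bk n b a * (bk n r s * (bk n b a)⁻¹) =
        bk n (swp b a r) (swp b a s) * tz n := by
      rw [← mul_assoc]
      exact conj_bk (a - b - 1) b a (by omega) ha r s hr hs hrs
    rw [bk_gt h',
      show swp a b r = swp b a r from by unfold swp; split_ifs <;> omega,
      show swp a b s = swp b a s from by unfold swp; split_ifs <;> omega,
      mul_inv_rev, zinv]
    simp only [mul_assoc, zmv, zmv', zz, z2, mul_one, base]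

end SchurAux

/-- In the Schur covering group `T_n`, for pairwise distinct `r, s, r'`:
`[r s][s r'] z = [r r'][r s] = [r' s][r r'] z`. -/
theorem stmt11 (n : ℕ) (r s r' : Fin n)
    (h₁ : r ≠ s) (h₂ : r ≠ r') (h₃ : s ≠ r') :
    bk n r s * bk n s r' * tz n = bk n r r' * bk n r s ∧
    bk n r r' * bk n r s = bk n r' s * bk n r r' * tz n := by

  open SchurAux in
  have hrs : (r : ℕ) ≠ (s : ℕ) := fun h => h₁ (Fin.ext h)
  have hrr' : (r : ℕ) ≠ (r' : ℕ) := fun h => h₂ (Fin.ext h)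
  have hsr' : (s : ℕ) ≠ (r' : ℕ) := fun h => h₃ (Fin.ext h)
  have c1 := conj_bk_ne (n := n) r.isLt s.isLt hrs s.isLt r'.isLt hsr'
  have c2 := conj_bk_ne (n := n) r.isLt r'.isLt hrr' r.isLt s.isLt hrs
  rw [show swp (r : ℕ) s s = (r : ℕ) from by unfold swp; split_ifs <;> omega,
    show swp (r : ℕ) s r' = (r' : ℕ) from by unfold swp; split_ifs <;> omega,
    mul_inv_eq_iff_eq_mul] at c1
  rw [show swp (r : ℕ) r' r = (r' : ℕ) from by unfold swp; split_ifs <;> omega,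
    show swp (r : ℕ) r' s = (s : ℕ) from by unfold swp; split_ifs <;> omega,
    mul_inv_eq_iff_eq_mul] at c2
  constructor
  · rw [c1]
    simp only [mul_assoc, zmv, zmv', zz, z2, mul_one]
  · rw [c2]
    simp only [mul_assoc, zmv, zmv', zz, z2, mul_one]
end

section
/- Let T_n be the Schur covering group of S_n with central element z and projection p : T_n → S_n, and let σ ▷ ν denote the conjugation action of σ ∈ S_n on ν ∈ T_n (conjugation by any preimage of σ, which is well defined since ker p = ⟨z⟩ is central). Then for all distinct r, s ∈ {1,...,n} and all σ ∈ S_n: σ ▷ [r s] = [σ(r) σ(s)] z^{ε(σ)}, where ε(σ) = 0 if σ is even and ε(σ) = 1 if σ is odd. -/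
section Basic
variable {n : ℕ}

lemma rel_one {w : FreeGroup (TGen n)} (hw : w ∈ TnRels n) :
    PresentedGroup.mk (TnRels n) w = 1 :=
  (QuotientGroup.eq_one_iff w).mpr (Subgroup.subset_normalClosure hw)

lemma tz_sq (n : ℕ) : tz n * tz n = 1 := by
  have := rel_one (n := n) (Or.inl rfl)
  simpa [tz, pow_two, PresentedGroup.of] using this

lemma tz_inv (n : ℕ) : (tz n)⁻¹ = tz n := by
  rw [inv_eq_iff_mul_eq_one, tz_sq]

lemma tt_sq (n r : ℕ) : tt n r * tt n r = 1 := by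
  unfold tt
  split
  · rename_i h
    have := rel_one (n := n) (Or.inr (Or.inl ⟨⟨r, h⟩, rfl⟩))
    simpa [pow_two, PresentedGroup.of] using this
  · simp

lemma tt_inv (n r : ℕ) : (tt n r)⁻¹ = tt n r := by
  rw [inv_eq_iff_mul_eq_one, tt_sq]

lemma tz_comm (n : ℕ) (g : Tn n) : tz n * g = g * tz n := by
  refine PresentedGroup.generated_by _ (Subgroup.centralizer {tz n}) ?_ g (tz n) rfl
  intro j
  rw [Subgroup.mem_centralizer_iff]
  rintro x rfl
  cases j with
  | inr u =>
    cases u; rfl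
  | inl r =>
    have := rel_one (n := n) (Or.inr (Or.inr (Or.inr (Or.inr ⟨r, rfl⟩))))
    simp only [map_mul, map_inv, mul_inv_eq_one] at this
    simpa [tz, PresentedGroup.of] using this

lemma tt_comm {n r s : ℕ} (hr : r < n - 1) (hs : s < n - 1)
    (h : r + 1 < s ∨ s + 1 < r) :
    tt n r * tt n s = tt n s * tt n r * tz n := by
  have := rel_one (n := n) (Or.inr (Or.inr (Or.inl ⟨⟨r, hr⟩, ⟨s, hs⟩, h, rfl⟩)))
  simp only [map_mul, map_inv, mul_inv_eq_one] at this
  simpa [tt, hr, hs, tz, PresentedGroup.of] using this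

lemma braid {n r : ℕ} (hr : r < n - 1) (hs : r + 1 < n - 1) :
    tt n r * tt n (r+1) * tt n r = tt n (r+1) * tt n r * tt n (r+1) := by
  have := rel_one (n := n) (Or.inr (Or.inr (Or.inr (Or.inl ⟨⟨r, hr⟩, ⟨r+1, hs⟩, rfl, rfl⟩))))
  simp only [map_mul, map_inv, mul_inv_eq_one] at this
  simpa [tt, hr, hs, tz, PresentedGroup.of] using this

end Basic

section BK
variable {n : ℕ}

lemma bk_adj (n r : ℕ) : bk n r (r+1) = tt n r := by
  rw [bk]; simp

lemma bk_step {r s : ℕ} (h : r + 1 < s) :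
    bk n r s = tt n r * bk n (r+1) s * tt n r * tz n := by
  rw [bk]; rw [dif_neg (by omega), dif_pos h]

lemma bk_flip {r s : ℕ} (h : s < r) : bk n r s = bk n s r * tz n := by
  rw [bk]; rw [dif_neg (by omega), dif_neg (by omega), dif_pos h]

lemma zmul (x y : Tn n) : x * (tz n * y) = tz n * (x * y) := by
  rw [← mul_assoc, ← tz_comm, mul_assoc]

lemma zmul' (x : Tn n) : x * tz n = tz n * x := (tz_comm n x).symm

lemma zz (x : Tn n) : tz n * (tz n * x) = x := by
  rw [← mul_assoc, tz_sq, one_mul]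

lemma tsq (r : ℕ) (x : Tn n) : tt n r * (tt n r * x) = x := by
  rw [← mul_assoc, tt_sq, one_mul]

lemma bk_symm {r s : ℕ} (h : r ≠ s) : bk n r s = bk n s r * tz n := by
  rcases lt_or_gt_of_ne h with h | h
  · rw [bk_flip h, mul_assoc, tz_sq, mul_one]
  · exact bk_flip h

-- continuation form of tt_comm
lemma tc {k r : ℕ} (hk : k < n - 1) (hr : r < n - 1) (h : k + 1 < r ∨ r + 1 < k)
    (x : Tn n) : tt n k * (tt n r * x) = tz n * (tt n r * (tt n k * x)) := by
  have e := tt_comm (n := n) hk hr h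
  rw [← mul_assoc, e]
  simp only [mul_assoc, zmul']
  simp only [zmul]

-- continuation form of braid
lemma brc {r : ℕ} (hr : r < n - 1) (hs : r + 1 < n - 1) (x : Tn n) :
    tt n r * (tt n (r+1) * (tt n r * x)) = tt n (r+1) * (tt n r * (tt n (r+1) * x)) := by
  have e := braid (n := n) hr hs
  simp only [← mul_assoc]
  rw [e]

-- t_k skew-commutes with [r s] when k is far from the interval [r,s]
lemma tt_bk_comm (k r s : ℕ) (hk : k < n - 1) (hs : s ≤ n - 1) (hrs : r < s)
    (h : k + 1 < r ∨ s < k) (x : Tn n) :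
    tt n k * (bk n r s * x) = tz n * (bk n r s * (tt n k * x)) := by
  rcases eq_or_lt_of_le (Nat.succ_le_of_lt hrs) with he | hl
  · rw [← he, bk_adj]
    exact tc hk (by omega) (by omega) x
  · have IH := tt_bk_comm k (r+1) s hk hs (by omega) (by omega)
    have hc := tc (n := n) (r := r) hk (by omega) (by omega)
    rw [bk_step hl]
    simp only [mul_assoc, zmul, zmul', zz, one_mul, mul_one]
    simp only [hc, IH, zmul, zz]
  termination_by s - r

end BK

/-- Action of the transposition (k, k+1) on ℕ. -/
def swN (k i : ℕ) : ℕ := if i = k then k + 1 else if i = k + 1 then k else i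

lemma swN_self (k : ℕ) : swN k k = k + 1 := by unfold swN; simp
lemma swN_succ (k : ℕ) : swN k (k+1) = k := by unfold swN; split_ifs <;> omega
lemma swN_other {k i : ℕ} (h1 : i ≠ k) (h2 : i ≠ k + 1) : swN k i = i := by
  unfold swN; split_ifs <;> omega

section Key
variable {n : ℕ}

/-- Key lemma: conjugation of `[r s]` by `t_k`, for `r < s ≤ n-1`. -/
lemma key (k : ℕ) (hk : k < n - 1) : ∀ r s : ℕ, s ≤ n - 1 → r < s → ∀ x : Tn n,
    tt n k * (bk n r s * (tt n k * x)) = tz n * (bk n (swN k r) (swN k s) * x) := by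
  intro r s hs hrs x
  by_cases hA : s < k ∨ k + 1 < r
  · -- both endpoints fixed
    rw [swN_other (by omega) (by omega), swN_other (by omega) (by omega)]
    rw [tt_bk_comm k r s hk hs hrs (by omega)]
    simp only [zmul, zz, tsq]
  by_cases hB : r = k ∧ s = k + 1
  · rw [hB.1, hB.2, swN_self, swN_succ, bk_adj, bk_flip (show k < k+1 by omega), bk_adj]
    simp only [mul_assoc, zmul, zmul', zz, tsq]
  by_cases hC : r = k ∧ k + 1 < s
  · rw [hC.1, swN_self, swN_other (by omega) (by omega),
      bk_step (r := k) (s := s) hC.2]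
    simp only [mul_assoc, zmul, zmul', zz, tsq]
  by_cases hD : r = k + 1
  · rw [hD, swN_succ, swN_other (by omega) (by omega),
      bk_step (r := k) (s := s) (by omega)]
    simp only [mul_assoc, zmul, zmul', zz, tsq]
  by_cases hE : s = k
  · rw [hE, swN_self, swN_other (by omega) (by omega)]
    by_cases hadj : r + 1 = k
    · -- braid base case
      rw [← hadj, bk_adj, bk_step (r := r) (s := r+2) (by omega), bk_adj]
      simp only [mul_assoc, zmul, zmul', zz, tsq]
      exact (brc (by omega) (by omega) x).symm
    · -- r + 1 < k : recurse
      have IH := key k hk (r+1) k (by omega) (by omega)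
      rw [swN_other (by omega) (by omega), swN_self] at IH
      rw [bk_step (r := r) (s := k) (by omega),
        bk_step (r := r) (s := k + 1) (by omega)]
      simp only [mul_assoc, zmul, zmul', zz, tsq]
      rw [tc (n := n) (k := r) (r := k) (by omega) hk (by omega)]
      simp only [zmul, zz]
      rw [tc (n := n) (k := k) (r := r) hk (by omega) (by omega), IH]
      simp only [zmul, zz]

  by_cases hF : s = k + 1
  · rw [hF, swN_other (by omega) (by omega), swN_succ]
    have hE' := key k hk r k (by omega) (by omega) (tt n k * x)
    rw [swN_other (by omega) (by omega), swN_self] at hE'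
    rw [show bk n (r) (k+1) * (tt n k * x)
        = tz n * (tt n k * (bk n r k * (tt n k * (tt n k * x)))) from by
      rw [hE', zz]]
    simp only [zmul, zz, tsq]
  · -- r < k and k + 1 < s
    rw [swN_other (by omega) (by omega), swN_other (by omega) (by omega)]
    by_cases hadj : r + 1 = k
    · rw [bk_step (r := r) (s := s) (by omega),
        bk_step (r := r + 1) (s := s) (by omega), ← hadj]
      simp only [mul_assoc, zmul, zmul', zz, tsq]
      rw [← brc (n := n) (r := r) (by omega) (by omega)]
      rw [tt_bk_comm r (r+2) s (by omega) hs (by omega) (by omega)]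
      simp only [zmul, zz]
      rw [brc (n := n) (r := r) (by omega) (by omega)]
      simp only [zmul, zz, tsq]
    · have IH := key k hk (r+1) s hs (by omega)
      rw [swN_other (by omega) (by omega), swN_other (by omega) (by omega)] at IH
      rw [bk_step (r := r) (s := s) (by omega)]
      simp only [mul_assoc, zmul, zmul', zz, tsq]
      rw [tc (n := n) (k := r) (r := k) (by omega) hk (by omega)]
      simp only [zmul, zz]
      rw [tc (n := n) (k := k) (r := r) hk (by omega) (by omega), IH]
      simp only [zmul, zz]
  termination_by r s => s - r

end Key

section Main
variable {n : ℕ}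

lemma swN_ne {k r s : ℕ} (h : r ≠ s) : swN k r ≠ swN k s := by
  unfold swN; split_ifs <;> omega

lemma key_all (k r s : ℕ) (hk : k < n - 1) (hr : r < n) (hs : s < n) (hrs : r ≠ s)
    (x : Tn n) :
    tt n k * (bk n r s * (tt n k * x)) = tz n * (bk n (swN k r) (swN k s) * x) := by
  rcases lt_or_gt_of_ne hrs with h | h
  · exact key k hk r s (by omega) h x
  · rw [bk_flip h, bk_symm (swN_ne hrs)]
    simp only [mul_assoc, zmul, zmul', zz]
    rw [show tt n k * (bk n s r * (tt n k * x)) = tz n * (bk n (swN k s) (swN k r) * x)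
      from key k hk s r (by omega) h x]
    simp only [zmul, zz]

lemma conj_prop (p : Tn n →* Equiv.Perm (Fin n))
    (hp : ∀ (r : ℕ) (h : r + 1 < n),
      p (tt n r) = Equiv.swap ⟨r, Nat.lt_of_succ_lt h⟩ ⟨r + 1, h⟩)
    (hz : p (tz n) = 1) (τ : Tn n) :
    ∀ (r s : Fin n), r ≠ s → τ * bk n r s * τ⁻¹ =
      bk n (p τ r) (p τ s) * tz n ^ (if Equiv.Perm.sign (p τ) = 1 then 0 else 1) := by
  have hcomm : ∀ (e : ℕ) (g : Tn n), tz n ^ e * g = g * tz n ^ e := by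
    intro e g
    exact (Commute.pow_left (tz_comm n g) e)
  have hconj : ∀ (g h x : Tn n) (e : ℕ), g * (h * tz n ^ e) * x = g * h * x * tz n ^ e := by
    intro g h x e
    rw [← mul_assoc, mul_assoc (g * h), hcomm, ← mul_assoc]
  have hEmul : ∀ σ1 σ2 : Equiv.Perm (Fin n),
      (tz n ^ (if Equiv.Perm.sign σ1 = 1 then 0 else 1)) *
        (tz n ^ (if Equiv.Perm.sign σ2 = 1 then 0 else 1)) =
      tz n ^ (if Equiv.Perm.sign (σ1 * σ2) = 1 then 0 else 1) := by
    intro σ1 σ2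
    rcases Int.units_eq_one_or (Equiv.Perm.sign σ1) with h1 | h1 <;>
      rcases Int.units_eq_one_or (Equiv.Perm.sign σ2) with h2 | h2 <;>
      simp [map_mul, h1, h2, pow_succ, tz_sq]
  set S : Subgroup (Tn n) :=
    { carrier := {τ | ∀ (r s : Fin n), r ≠ s → τ * bk n r s * τ⁻¹ =
        bk n (p τ r) (p τ s) * tz n ^ (if Equiv.Perm.sign (p τ) = 1 then 0 else 1)},
      one_mem' := by
        intro r s hrs
        simp
      mul_mem' := by
        intro a b ha hb r s hrs
        have hbs : (p b) r ≠ (p b) s := fun h => hrs ((p b).injective h)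
        have h1 := hb r s hrs
        have h2 := ha ((p b) r) ((p b) s) hbs
        calc a * b * bk n r s * (a * b)⁻¹
            = a * (b * bk n r s * b⁻¹) * a⁻¹ := by group
          _ = a * (bk n (p b r) (p b s) *
                tz n ^ (if Equiv.Perm.sign (p b) = 1 then 0 else 1)) * a⁻¹ := by rw [h1]
          _ = (a * bk n (p b r) (p b s) * a⁻¹) *
                tz n ^ (if Equiv.Perm.sign (p b) = 1 then 0 else 1) := by
              rw [hconj]
          _ = bk n (p a (p b r)) (p a (p b s)) *
                tz n ^ (if Equiv.Perm.sign (p a) = 1 then 0 else 1) *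
                tz n ^ (if Equiv.Perm.sign (p b) = 1 then 0 else 1) := by rw [h2]
          _ = bk n (p (a*b) r) (p (a*b) s) *
                tz n ^ (if Equiv.Perm.sign (p (a*b)) = 1 then 0 else 1) := by
              rw [mul_assoc, hEmul, show p (a*b) = p a * p b from map_mul p a b]
              simp only [Equiv.Perm.mul_apply]
      inv_mem' := by
        intro x hx r s hrs
        have hinj : ((p x)⁻¹) r ≠ ((p x)⁻¹) s := fun h => hrs (((p x)⁻¹).injective h)
        have h1 := hx (((p x)⁻¹) r) (((p x)⁻¹) s) hinj
        simp only [show ∀ y, (p x) ((p x)⁻¹ y) = y from fun y => (p x).apply_symm_apply y] at h1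
        have hsgn : (if Equiv.Perm.sign (p x⁻¹) = 1 then 0 else 1) =
            (if Equiv.Perm.sign (p x) = 1 then 0 else 1) := by
          rw [map_inv, map_inv]
          rcases Int.units_eq_one_or (Equiv.Perm.sign (p x)) with h | h <;> simp [h]
        rw [hsgn, map_inv, inv_inv]
        have h2 : x * (bk n (((p x)⁻¹) r) (((p x)⁻¹) s) *
            tz n ^ (if Equiv.Perm.sign (p x) = 1 then 0 else 1)) * x⁻¹ = bk n r s := by
          rw [hconj, h1, mul_assoc, ← pow_add]
          have : tz n ^ ((if Equiv.Perm.sign (p x) = 1 then 0 else 1) +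
              (if Equiv.Perm.sign (p x) = 1 then 0 else 1)) = 1 := by
            split_ifs <;> simp [pow_succ, tz_sq]
          rw [this, mul_one]
        rw [← h2]
        group }
  intro r s hrs
  refine PresentedGroup.generated_by _ S ?_ τ r s hrs
  intro j
  cases j with
  | inr u =>
    cases u
    intro r s hrs
    have hofz : (PresentedGroup.of (Sum.inr () : TGen n) : Tn n) = tz n := rfl
    rw [hofz, hz, tz_inv]
    have h1 : Equiv.Perm.sign (1 : Equiv.Perm (Fin n)) = 1 := map_one _
    rw [h1, if_pos rfl, pow_zero, mul_one]
    rw [tz_comm, mul_assoc, tz_sq, mul_one]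
    simp only [Equiv.Perm.one_apply]
  | inl k =>
    intro r s hrs
    have hk : (k : ℕ) < n - 1 := k.2
    have hoft : (PresentedGroup.of (Sum.inl k : TGen n) : Tn n) = tt n k := by
      rw [tt, dif_pos k.2]
    have hswap := hp k (by omega)
    rw [hoft, hswap]
    have hsgn : Equiv.Perm.sign (Equiv.swap (⟨k, by omega⟩ : Fin n) ⟨k+1, by omega⟩) = -1 :=
      Equiv.Perm.sign_swap (by simp [Fin.ext_iff])
    rw [hsgn]
    have hswc : ∀ (i : Fin n),
        ((Equiv.swap (⟨k, by omega⟩ : Fin n) ⟨k+1, by omega⟩ i : Fin n) : ℕ) = swN k i := by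
      intro i
      rw [Equiv.swap_apply_def]
      unfold swN
      split_ifs with a1 a2 a3 a4 a5 <;>
        simp_all [Fin.ext_iff] <;> omega
    rw [hswc r, hswc s]
    have := key_all (n := n) k r s hk r.2 s.2 (by simpa [Fin.ext_iff] using hrs) 1
    rw [mul_one, mul_one] at this
    rw [tt_inv, if_neg (by decide), pow_one, mul_assoc, this, ← tz_comm]
end Main


/-- Let `p : T_n → S_n` be the covering projection (`t_r ↦ (r, r+1)`, `z ↦ 1`), and
let `σ ▷ ν` denote conjugation of `ν ∈ T_n` by any preimage `τ` of `σ ∈ S_n` (well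
defined since `ker p = ⟨z⟩` is central). Then for distinct `r, s` and any `σ`:
`σ ▷ [r s] = [σ(r) σ(s)] z^{ε(σ)}`, where `ε(σ)` is the parity of `σ`. -/
theorem stmt13 (n : ℕ) (p : Tn n →* Equiv.Perm (Fin n))
    (hp : ∀ (r : ℕ) (h : r + 1 < n),
      p (tt n r) = Equiv.swap ⟨r, by omega⟩ ⟨r + 1, h⟩)
    (hz : p (tz n) = 1)
    (σ : Equiv.Perm (Fin n)) (τ : Tn n) (hτ : p τ = σ)
    (r s : Fin n) (hrs : r ≠ s) :
    τ * bk n r s * τ⁻¹ =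
      bk n (σ r) (σ s) * tz n ^ (if Equiv.Perm.sign σ = 1 then 0 else 1) := by
  subst hτ
  exact conj_prop p hp hz τ r s hrs
end

section
/- Let q = (q_ij) with q_ii = 1, q_ji = q_ij^{-1}, let α be a normalized 2-cocycle on a finite group G acting linearly on V with g·v_i = Σ_k g^i_k v_k, and let κ : V × V → C^α G be bilinear with κ(v_i, v_j) = −q_ij κ(v_j, v_i), with components κ_g defined by κ(v,w) = Σ_g κ_g(v,w) t_g. If the algebra H = T(V) #_α G / (v_i v_j − q_ij v_j v_i − κ(v_i,v_j)) satisfies the PBW condition (i.e., {v_1^{m_1}⋯v_n^{m_n} t_g} is a C-basis), then for all g, h ∈ G and all 1 ≤ i < j ≤ n: (α(h,g)/α(hgh^{-1},h)) κ_g(v_j, v_i) = Σ_{k<l} det_{ijkl}(h) κ_{hgh^{-1}}(v_l, v_k), where det_{ijkl}(h) = h^j_l h^i_k − q_ji h^i_l h^j_k. -/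
open FreeAlgebra

/-- The defining relations of the algebra
`H = T(V) #_α G / (v_i v_j − q_{ij} v_j v_i − κ(v_i,v_j))`, presented on the free
algebra generated by the `v_i` (`Sum.inl i`) and the `t_g` (`Sum.inr g`):
`t_g v_i = (g·v_i) t_g`, `t_g t_h = α(g,h) t_{gh}`, `t_1 = 1`, and
`v_i v_j = q_{ij} v_j v_i + ∑_g κ_g(v_i,v_j) t_g`. -/
def tqRel (n : ℕ) (q : Fin n → Fin n → ℂ) (G : Type) [Group G] [Fintype G]
    (M : G → Fin n → Fin n → ℂ) (α : G → G → ℂˣ) (κ : G → Fin n → Fin n → ℂ)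
    (a b : FreeAlgebra ℂ (Fin n ⊕ G)) : Prop :=
  (∃ (g : G) (i : Fin n), a = ι ℂ (Sum.inr g) * ι ℂ (Sum.inl i) ∧
      b = (∑ k, M g i k • ι ℂ (Sum.inl k)) * ι ℂ (Sum.inr g)) ∨
  (∃ g h : G, a = ι ℂ (Sum.inr g) * ι ℂ (Sum.inr h) ∧
      b = (α g h : ℂ) • ι ℂ (Sum.inr (g * h))) ∨
  (a = ι ℂ (Sum.inr (1 : G)) ∧ b = 1) ∨
  (∃ i j : Fin n, a = ι ℂ (Sum.inl i) * ι ℂ (Sum.inl j) ∧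
      b = q i j • (ι ℂ (Sum.inl j) * ι ℂ (Sum.inl i)) + ∑ g : G, κ g i j • ι ℂ (Sum.inr g))

/-- The algebra `H = T(V) #_α G / (v_i v_j − q_{ij} v_j v_i − κ(v_i,v_j))`. -/
abbrev TQDH (n : ℕ) (q : Fin n → Fin n → ℂ) (G : Type) [Group G] [Fintype G]
    (M : G → Fin n → Fin n → ℂ) (α : G → G → ℂˣ) (κ : G → Fin n → Fin n → ℂ) : Type :=
  RingQuot (tqRel n q G M α κ)

/-- The PBW monomial `v_1^{m_1} ⋯ v_n^{m_n} t_g` in `H`. -/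
noncomputable def tqMono (n : ℕ) (q : Fin n → Fin n → ℂ) (G : Type) [Group G] [Fintype G]
    (M : G → Fin n → Fin n → ℂ) (α : G → G → ℂˣ) (κ : G → Fin n → Fin n → ℂ)
    (m : Fin n → ℕ) (g : G) : TQDH n q G M α κ :=
  RingQuot.mkAlgHom ℂ _
    ((((List.finRange n).map fun i => ι ℂ (Sum.inl i : Fin n ⊕ G) ^ m i).prod) *
      ι ℂ (Sum.inr g))


lemma prodAux1 {Mo : Type*} [Monoid Mo] :
    ∀ (n : ℕ) (f : Fin n → Mo) (l : Fin n), (∀ i, i ≠ l → f i = 1) →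
      ((List.finRange n).map f).prod = f l := by
  intro n
  induction n with
  | zero => exact fun f l _ => l.elim0
  | succ n ih =>
    intro f l hf
    rw [List.finRange_succ, List.map_cons, List.prod_cons, List.map_map]
    rcases Fin.eq_zero_or_eq_succ l with rfl | ⟨l', rfl⟩
    · have h1 : ((List.finRange n).map (f ∘ Fin.succ)).prod = 1 := by
        apply List.prod_eq_one
        intro x hx
        simp only [List.mem_map, Function.comp] at hx
        obtain ⟨a, -, rfl⟩ := hx
        exact hf _ (Fin.succ_ne_zero a)
      rw [h1, mul_one]
    · rw [hf 0 (Ne.symm (Fin.succ_ne_zero l')),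
        ih (f ∘ Fin.succ) l' (fun a ha => hf _ (fun hc => ha (Fin.succ_injective _ hc))),
        one_mul]
      rfl

lemma prodAux2 {Mo : Type*} [Monoid Mo] :
    ∀ (n : ℕ) (f : Fin n → Mo) (k l : Fin n), k < l → (∀ i, i ≠ k → i ≠ l → f i = 1) →
      ((List.finRange n).map f).prod = f k * f l := by
  intro n
  induction n with
  | zero => exact fun f k _ _ _ => k.elim0
  | succ n ih =>
    intro f k l hkl hf
    rw [List.finRange_succ, List.map_cons, List.prod_cons, List.map_map]
    rcases Fin.eq_zero_or_eq_succ l with rfl | ⟨l', rfl⟩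
    · exact absurd hkl (Fin.not_lt_zero k)
    rcases Fin.eq_zero_or_eq_succ k with rfl | ⟨k', rfl⟩
    · rw [prodAux1 n (f ∘ Fin.succ) l'
        (fun a ha => hf _ (Fin.succ_ne_zero a) (fun hc => ha (Fin.succ_injective _ hc)))]
      rfl
    · have hkl' : k' < l' := Fin.succ_lt_succ_iff.mp hkl
      rw [hf 0 (Ne.symm (Fin.succ_ne_zero k')) (Ne.symm (Fin.succ_ne_zero l')), one_mul,
        ih (f ∘ Fin.succ) k' l' hkl'
          (fun a ha hb => hf _ (fun hc => ha (Fin.succ_injective _ hc))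
            (fun hc => hb (Fin.succ_injective _ hc)))]
      rfl

section Main

variable (n : ℕ) (q : Fin n → Fin n → ℂ)
    (G : Type) [Group G] [Fintype G] (M : G → Fin n → Fin n → ℂ)
    (α : G → G → ℂˣ) (κ : G → Fin n → Fin n → ℂ)

noncomputable def vvv (k : Fin n) : TQDH n q G M α κ :=
  RingQuot.mkAlgHom ℂ (tqRel n q G M α κ) (ι ℂ (Sum.inl k))

noncomputable def ttt (b : G) : TQDH n q G M α κ :=
  RingQuot.mkAlgHom ℂ (tqRel n q G M α κ) (ι ℂ (Sum.inr b))

lemma R1 (b : G) (x : Fin n) :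
    ttt n q G M α κ b * vvv n q G M α κ x
      = (∑ k, M b x k • vvv n q G M α κ k) * ttt n q G M α κ b := by
  have hrel : tqRel n q G M α κ (ι ℂ (Sum.inr b) * ι ℂ (Sum.inl x))
      ((∑ k, M b x k • ι ℂ (Sum.inl k)) * ι ℂ (Sum.inr b)) := Or.inl ⟨b, x, rfl, rfl⟩
  have := RingQuot.mkAlgHom_rel ℂ hrel
  simpa [vvv, ttt, map_mul, map_sum, map_smul] using this

lemma R2 (b b' : G) :
    ttt n q G M α κ b * ttt n q G M α κ b'
      = (α b b' : ℂ) • ttt n q G M α κ (b * b') := by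
  have hrel : tqRel n q G M α κ (ι ℂ (Sum.inr b) * ι ℂ (Sum.inr b'))
      ((α b b' : ℂ) • ι ℂ (Sum.inr (b * b'))) := Or.inr (Or.inl ⟨b, b', rfl, rfl⟩)
  have := RingQuot.mkAlgHom_rel ℂ hrel
  simpa [vvv, ttt, map_mul, map_smul] using this

lemma R4 (x y : Fin n) :
    vvv n q G M α κ x * vvv n q G M α κ y
      = q x y • (vvv n q G M α κ y * vvv n q G M α κ x)
        + ∑ b : G, κ b x y • ttt n q G M α κ b := by
  have hrel : tqRel n q G M α κ (ι ℂ (Sum.inl x) * ι ℂ (Sum.inl y))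
      (q x y • (ι ℂ (Sum.inl y) * ι ℂ (Sum.inl x)) + ∑ b : G, κ b x y • ι ℂ (Sum.inr b)) :=
    Or.inr (Or.inr (Or.inr ⟨x, y, rfl, rfl⟩))
  have := RingQuot.mkAlgHom_rel ℂ hrel
  simpa [vvv, ttt, map_mul, map_add, map_sum, map_smul] using this

lemma mono0 (b : G) : tqMono n q G M α κ 0 b = ttt n q G M α κ b := by
  unfold tqMono
  have h1 : (((List.finRange n).map fun i =>
      ι ℂ (Sum.inl i : Fin n ⊕ G) ^ (0 : Fin n → ℕ) i).prod) = 1 :=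
    List.prod_eq_one (by simp)
  rw [h1, one_mul]
  rfl

/-- exponent function of the monomial `v_k v_l`. -/
def ee (k l : Fin n) : Fin n → ℕ := fun m => (if m = k then 1 else 0) + (if m = l then 1 else 0)

lemma ee_ne_zero (k l : Fin n) : ee n k l ≠ 0 := by
  intro hc
  have := congrFun hc k
  rcases eq_or_ne k l with rfl | hne
  · simp [ee] at this
  · simp [ee, hne] at this

lemma mono2 (k l : Fin n) (b : G) (hkl : k ≤ l) :
    tqMono n q G M α κ (ee n k l) b
      = vvv n q G M α κ k * vvv n q G M α κ l * ttt n q G M α κ b := by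
  unfold tqMono
  rcases eq_or_lt_of_le hkl with rfl | hlt
  · rw [prodAux1 n _ k (fun a ha => by simp [ee, ha])]
    have : ee n k k k = 2 := by simp [ee]
    rw [this, map_mul, map_pow, sq]
    rfl
  · rw [prodAux2 n _ k l hlt (fun a ha hb => by simp [ee, ha, hb])]
    have h1 : ee n k l k = 1 := by simp [ee, ne_of_lt hlt]
    have h2 : ee n k l l = 1 := by simp [ee, Ne.symm (ne_of_lt hlt)]
    rw [h1, h2, pow_one, pow_one, map_mul, map_mul]
    rfl

end Main

/-- Theorem (PBW ⇒ mixed-relation condition, condition (1)): if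
`{v_1^{m_1}⋯v_n^{m_n} t_g}` is a `ℂ`-basis of `H` (linearly independent and
spanning), then for all `g, h ∈ G` and `i < j`:
`(α(h,g)/α(hgh⁻¹,h)) κ_g(v_j,v_i) = ∑_{k<l} det_{ijkl}(h) κ_{hgh⁻¹}(v_l,v_k)`,
where `det_{ijkl}(h) = h^j_l h^i_k − q_{ji} h^i_l h^j_k`. -/
theorem stmt16 (n : ℕ) (q : Fin n → Fin n → ℂ)
    (hq0 : ∀ i j, q i j ≠ 0) (hq1 : ∀ i, q i i = 1)
    (hqinv : ∀ i j, q j i = (q i j)⁻¹)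
    (G : Type) [Group G] [Fintype G] (M : G → Fin n → Fin n → ℂ)
    (hM1 : ∀ i k : Fin n, M 1 i k = if i = k then 1 else 0)
    (hMmul : ∀ (g h : G) (i k : Fin n), M (g * h) i k = ∑ j, M h i j * M g j k)
    (hSq : ∀ (g : G) (i j : Fin n),
      (∑ k, M g i k • sqGen q k) * (∑ l, M g j l • sqGen q l) =
        q i j • ((∑ k, M g j k • sqGen q k) * (∑ l, M g i l • sqGen q l)))
    (α : G → G → ℂˣ)
    (hcoc : ∀ g₁ g₂ g₃ : G, α g₁ g₂ * α (g₁ * g₂) g₃ = α g₂ g₃ * α g₁ (g₂ * g₃))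
    (hnorm : ∀ g : G, α g 1 = 1 ∧ α 1 g = 1)
    (κ : G → Fin n → Fin n → ℂ)
    (hκ : ∀ (g : G) (i j : Fin n), κ g i j = -(q i j) * κ g j i)
    (hPBW : LinearIndependent ℂ
        (fun p : (Fin n → ℕ) × G => tqMono n q G M α κ p.1 p.2) ∧
      Submodule.span ℂ
        (Set.range fun p : (Fin n → ℕ) × G => tqMono n q G M α κ p.1 p.2) = ⊤)
    (g h : G) (i j : Fin n) (hij : i < j) :
    ((α h g : ℂ) / (α (h * g * h⁻¹) h : ℂ)) * κ g j i =
      ∑ k : Fin n, ∑ l : Fin n,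
        if k < l then (M h j l * M h i k - q j i * M h i l * M h j k) *
          κ (h * g * h⁻¹) l k else 0 := by
  
  classical
  obtain ⟨hLI, -⟩ := hPBW
  have hα' : ((α (h * g * h⁻¹) h : ℂˣ) : ℂ) ≠ 0 := Units.ne_zero _
  set c : Fin n → Fin n → ℂ :=
    fun k l => M h j k * M h i l - q j i * (M h i k * M h j l) with hc
  set D : Fin n → Fin n → ℂ :=
    fun k l => (if l < k then 0 else c k l) + (if k < l then c l k * q l k else 0) with hD
  set E : Fin n → Fin n → ℂ := fun k l => if l < k then c k l else 0 with hE
  have step1 : ∀ x y : Fin n,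
      ttt n q G M α κ h * (vvv n q G M α κ x * vvv n q G M α κ y)
        = ((∑ k, M h x k • vvv n q G M α κ k) * (∑ l, M h y l • vvv n q G M α κ l))
            * ttt n q G M α κ h := by
    intro x y
    rw [← mul_assoc, R1, mul_assoc, R1, ← mul_assoc]
  have PP : ∀ x y : Fin n,
      (∑ k, M h x k • vvv n q G M α κ k) * (∑ l, M h y l • vvv n q G M α κ l)
        = ∑ k, ∑ l, (M h x k * M h y l) • (vvv n q G M α κ k * vvv n q G M α κ l) := by
    intro x y
    simp only [Finset.sum_mul, smul_mul_assoc]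
    simp only [Finset.mul_sum, mul_smul_comm, Finset.smul_sum, smul_smul]
  have hsub : vvv n q G M α κ j * vvv n q G M α κ i
      - q j i • (vvv n q G M α κ i * vvv n q G M α κ j)
      = ∑ b : G, κ b j i • ttt n q G M α κ b := by
    rw [R4]
    exact add_sub_cancel_left _ _
  have KEY :
      ∑ b : G, (κ b j i * (α h b : ℂ)) • ttt n q G M α κ (h * b)
        = (∑ k, ∑ l, D k l •
            (vvv n q G M α κ k * vvv n q G M α κ l * ttt n q G M α κ h))
          + ∑ k, ∑ l, ∑ a : G,
              (E k l * κ a k l * (α a h : ℂ)) • ttt n q G M α κ (a * h) := by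
    simp only [hD, hE]
    have lhs1 : ∑ b : G, (κ b j i * (α h b : ℂ)) • ttt n q G M α κ (h * b)
        = ttt n q G M α κ h * ∑ b : G, κ b j i • ttt n q G M α κ b := by
      rw [Finset.mul_sum]
      refine Finset.sum_congr rfl fun b _ => ?_
      rw [mul_smul_comm, R2, smul_smul]
    rw [lhs1, ← hsub, mul_sub, mul_smul_comm, step1, step1, PP, PP,
      ← smul_mul_assoc, ← sub_mul]
    have hcc : (∑ k, ∑ l, (M h j k * M h i l) • (vvv n q G M α κ k * vvv n q G M α κ l))
        - q j i • ∑ k, ∑ l, (M h i k * M h j l) • (vvv n q G M α κ k * vvv n q G M α κ l)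
        = ∑ k, ∑ l, c k l • (vvv n q G M α κ k * vvv n q G M α κ l) := by
      simp only [Finset.smul_sum, smul_smul, ← Finset.sum_sub_distrib, hc]
      exact Finset.sum_congr rfl fun k _ => Finset.sum_congr rfl fun l _ =>
        (sub_smul (R := ℂ) (M := TQDH n q G M α κ) _ _ _).symm
    rw [hcc, Finset.sum_mul]
    have expand : ∀ k : Fin n,
        (∑ l, c k l • (vvv n q G M α κ k * vvv n q G M α κ l)) * ttt n q G M α κ h
        = ∑ l, c k l • (vvv n q G M α κ k * vvv n q G M α κ l * ttt n q G M α κ h) := by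
      intro k
      simp only [Finset.sum_mul, smul_mul_assoc, mul_assoc]
    simp only [expand]
    have red : ∀ k l : Fin n,
        c k l • (vvv n q G M α κ k * vvv n q G M α κ l * ttt n q G M α κ h)
        = (if l < k then 0 else c k l) •
            (vvv n q G M α κ k * vvv n q G M α κ l * ttt n q G M α κ h)
          + (if l < k then c k l * q k l else 0) •
            (vvv n q G M α κ l * vvv n q G M α κ k * ttt n q G M α κ h)
          + ∑ a : G, ((if l < k then c k l else 0) * κ a k l * (α a h : ℂ)) •
              ttt n q G M α κ (a * h) := by
      intro k l
      by_cases hlk : l < k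
      · simp only [if_pos hlk, zero_smul, zero_add]
        have hred : vvv n q G M α κ k * vvv n q G M α κ l * ttt n q G M α κ h
            = q k l • (vvv n q G M α κ l * vvv n q G M α κ k * ttt n q G M α κ h)
              + ∑ a : G, (κ a k l * (α a h : ℂ)) • ttt n q G M α κ (a * h) := by
          rw [R4 n q G M α κ k l, add_mul, smul_mul_assoc, Finset.sum_mul]
          congr 1
          refine Finset.sum_congr rfl fun a _ => ?_
          rw [smul_mul_assoc, R2, smul_smul]
        rw [hred, smul_add, smul_smul, Finset.smul_sum]
        congr 1
        refine Finset.sum_congr rfl fun a _ => ?_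
        rw [smul_smul, ← mul_assoc]
      · simp [hlk]
    simp only [red, Finset.sum_add_distrib]
    have hBswap : (∑ k, ∑ l, (if l < k then c k l * q k l else 0) •
          (vvv n q G M α κ l * vvv n q G M α κ k * ttt n q G M α κ h))
        = ∑ k, ∑ l, (if k < l then c l k * q l k else 0) •
          (vvv n q G M α κ k * vvv n q G M α κ l * ttt n q G M α κ h) := Finset.sum_comm
    rw [hBswap]
    have hAB : (∑ k, ∑ l, (if l < k then 0 else c k l) •
          (vvv n q G M α κ k * vvv n q G M α κ l * ttt n q G M α κ h))
        + (∑ k, ∑ l, (if k < l then c l k * q l k else 0) •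
          (vvv n q G M α κ k * vvv n q G M α κ l * ttt n q G M α κ h))
        = ∑ k, ∑ l, ((if l < k then 0 else c k l) + (if k < l then c l k * q l k else 0)) •
          (vvv n q G M α κ k * vvv n q G M α κ l * ttt n q G M α κ h) := by
      rw [← Finset.sum_add_distrib]
      refine Finset.sum_congr rfl fun k _ => ?_
      rw [← Finset.sum_add_distrib]
      refine Finset.sum_congr rfl fun l _ => ?_
      rw [← add_smul]
    rw [hAB]
  -- the Finsupp of coefficients
  set F : ((Fin n → ℕ) × G) →₀ ℂ :=
    (∑ b : G, Finsupp.single ((0 : Fin n → ℕ), h * b) (κ b j i * (α h b : ℂ)))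
    - (∑ k, ∑ l, Finsupp.single (ee n k l, h) (D k l))
    - (∑ k, ∑ l, ∑ a : G,
        Finsupp.single ((0 : Fin n → ℕ), a * h) (E k l * κ a k l * (α a h : ℂ))) with hF
  have hDW : ∀ k l : Fin n, D k l • tqMono n q G M α κ (ee n k l) h
      = D k l • (vvv n q G M α κ k * vvv n q G M α κ l * ttt n q G M α κ h) := by
    intro k l
    rcases le_or_gt k l with hkl | hlk
    · rw [mono2 n q G M α κ k l h hkl]
    · have hD0 : D k l = 0 := by simp [hD, hlk, asymm hlk]
      rw [hD0, zero_smul, zero_smul]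
  have hFtotal : Finsupp.linearCombination ℂ
      (fun p : (Fin n → ℕ) × G => tqMono n q G M α κ p.1 p.2) F = 0 := by
    rw [hF]
    simp only [map_sub, map_sum, Finsupp.linearCombination_single]
    simp only [mono0, hDW]
    rw [KEY, sub_sub, sub_self]
  have hF0 : F = 0 := linearIndependent_iff.mp hLI F hFtotal
  have hev := DFunLike.congr_fun hF0 ((0 : Fin n → ℕ), h * g)
  rw [hF] at hev
  have hiff : ∀ a : G, (a * h = h * g) ↔ a = h * g * h⁻¹ := fun a =>
    (eq_mul_inv_iff_mul_eq).symm
  simp only [Finsupp.sub_apply, Finsupp.finset_sum_apply, Finsupp.single_apply,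
    Finsupp.coe_zero, Pi.zero_apply, Prod.mk.injEq, eq_self_iff_true, true_and,
    mul_right_inj, hiff, ne_eq, ee_ne_zero, false_and, if_false,
    Finset.sum_const_zero, sub_zero, Finset.sum_ite_eq', Finset.mem_univ, if_true] at hev
  have hmain := sub_eq_zero.mp hev
  rw [div_mul_eq_mul_div, div_eq_iff hα']
  calc ((α h g : ℂˣ) : ℂ) * κ g j i = κ g j i * ((α h g : ℂˣ) : ℂ) := mul_comm _ _
    _ = ∑ k, ∑ l, E k l * κ (h * g * h⁻¹) k l * ((α (h * g * h⁻¹) h : ℂˣ) : ℂ) := hmain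
    _ = ∑ k, ∑ l, (if k < l then (M h j l * M h i k - q j i * M h i l * M h j k) *
          κ (h * g * h⁻¹) l k else 0) * ((α (h * g * h⁻¹) h : ℂˣ) : ℂ) := by
        rw [Finset.sum_comm]
        refine Finset.sum_congr rfl fun k _ => Finset.sum_congr rfl fun l _ => ?_
        simp only [hE, hc]
        split_ifs with hkl
        · ring
        · simp
    _ = (∑ k : Fin n, ∑ l : Fin n,
          if k < l then (M h j l * M h i k - q j i * M h i l * M h j k) *
            κ (h * g * h⁻¹) l k else 0) * ((α (h * g * h⁻¹) h : ℂˣ) : ℂ) := by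
        rw [Finset.sum_mul]
        exact Finset.sum_congr rfl fun k _ => (Finset.sum_mul _ _ _).symm
end

section
/- In the setting of twisted quantum Drinfeld Hecke algebras: if H = T(V) #_α G / (v_i v_j − q_ij v_j v_i − κ(v_i,v_j)) satisfies the PBW condition, then for all g ∈ G and all 1 ≤ i < j < k ≤ n: κ_g(v_k, v_j)·(g·v_i − q_ji q_ki v_i) + κ_g(v_k, v_i)·(q_kj v_j − q_ji (g·v_j)) + κ_g(v_j, v_i)·(q_kj q_ki (g·v_k) − v_k) = 0, as an identity in V. -/
open FreeAlgebra

section Aux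
open FreeAlgebra
variable {n : ℕ} (q : Fin n → Fin n → ℂ) (G : Type) [Group G] [Fintype G]
    (M : G → Fin n → Fin n → ℂ) (α : G → G → ℂˣ) (κ : G → Fin n → Fin n → ℂ)

/-- image of `v_a` in `H`. -/
noncomputable def tqU (a : Fin n) : TQDH n q G M α κ :=
  RingQuot.mkAlgHom ℂ (tqRel n q G M α κ) (ι ℂ (Sum.inl a))

/-- image of `t_g` in `H`. -/
noncomputable def tqT (g : G) : TQDH n q G M α κ :=
  RingQuot.mkAlgHom ℂ (tqRel n q G M α κ) (ι ℂ (Sum.inr g))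

local notation "U" => tqU q G M α κ
local notation "T" => tqT q G M α κ

lemma tq_comm (a b : Fin n) : U a * U b =
    q a b • (U b * U a) + ∑ g' : G, κ g' a b • T g' := by
  have hrel : tqRel n q G M α κ (ι ℂ (Sum.inl a) * ι ℂ (Sum.inl b))
      (q a b • (ι ℂ (Sum.inl b) * ι ℂ (Sum.inl a)) + ∑ g' : G, κ g' a b • ι ℂ (Sum.inr g')) :=
    Or.inr (Or.inr (Or.inr ⟨a, b, rfl, rfl⟩))
  have h := RingQuot.mkAlgHom_rel ℂ hrel
  simpa [tqU, tqT, map_mul, map_add, map_smul, map_sum] using h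

lemma tq_swap (g' : G) (a : Fin n) : T g' * U a =
    ∑ m' : Fin n, M g' a m' • (U m' * T g') := by
  have hrel : tqRel n q G M α κ (ι ℂ (Sum.inr g') * ι ℂ (Sum.inl a))
      ((∑ m', M g' a m' • ι ℂ (Sum.inl m')) * ι ℂ (Sum.inr g')) :=
    Or.inl ⟨g', a, rfl, rfl⟩
  have h := RingQuot.mkAlgHom_rel ℂ hrel
  simp only [map_mul, map_add, map_smul, map_sum] at h
  simp only [tqU, tqT]
  rw [h, Finset.sum_mul]
  simp [smul_mul_assoc]

lemma tq_mono_single (m : Fin n) (g : G) :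
    tqMono n q G M α κ (Pi.single m 1) g = U m * T g := by
  rw [tqMono, map_mul, map_list_prod, List.map_map]
  rw [show ((RingQuot.mkAlgHom ℂ (tqRel n q G M α κ)) ∘ fun i =>
      ι ℂ (Sum.inl i : Fin n ⊕ G) ^ (Pi.single m 1 : Fin n → ℕ) i) =
      fun i => U i ^ (Pi.single m 1 : Fin n → ℕ) i from by
    funext i; simp [tqU, map_pow]]
  rw [List.prod_map_eq_pow_single m]
  · rw [List.count_eq_one_of_mem (List.nodup_finRange n) (List.mem_finRange m), pow_one]
    simp only [tqT]
    simp
  · intro b hb _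
    simp [Pi.single_apply, hb]

lemma tq_udelta (a : Fin n) (g' : G) : U a * T g' =
    ∑ m' : Fin n, (if m' = a then (1:ℂ) else 0) • (U m' * T g') := by
  simp [ite_smul]

lemma tq_expand2 (i j k : Fin n) : U k * U j * U i =
    (q k j * q k i * q j i) • (U i * U j * U k) +
      ∑ g' : G, ∑ m' : Fin n,
        (q k j * q k i * κ g' j i * M g' k m' +
         q k j * κ g' k i * (if m' = j then (1:ℂ) else 0) +
         κ g' k j * M g' i m') • (U m' * T g') := by
  rw [tq_comm q G M α κ k j, add_mul, smul_mul_assoc, Finset.sum_mul, mul_assoc]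
  simp only [smul_mul_assoc, tq_swap q G M α κ]
  rw [tq_comm q G M α κ k i]
  simp only [mul_add, smul_add, Finset.mul_sum, mul_smul_comm, smul_smul, Finset.smul_sum]
  rw [← mul_assoc, tq_comm q G M α κ j i, add_mul, smul_mul_assoc, Finset.sum_mul]
  simp only [smul_mul_assoc, tq_swap q G M α κ, smul_add, Finset.smul_sum, smul_smul]
  simp only [add_smul, mul_ite, mul_one, mul_zero, ite_smul, one_smul, zero_smul,
    Finset.sum_add_distrib, Finset.sum_ite_eq', Finset.mem_univ, if_true, mul_assoc]
  abel

lemma tq_expand1 (i j k : Fin n) : U k * (U j * U i) =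
    (q k j * q k i * q j i) • (U i * U j * U k) +
      ∑ g' : G, ∑ m' : Fin n,
        (q j i * q k i * κ g' k j * (if m' = i then (1:ℂ) else 0) +
         q j i * κ g' k i * M g' j m' +
         κ g' j i * (if m' = k then (1:ℂ) else 0)) • (U m' * T g') := by
  rw [tq_comm q G M α κ j i]
  simp only [mul_add, mul_smul_comm, Finset.mul_sum]
  rw [← mul_assoc, tq_comm q G M α κ k i]
  simp only [add_mul, smul_mul_assoc, Finset.sum_mul, smul_add, smul_smul, Finset.smul_sum,
    tq_swap q G M α κ]
  rw [mul_assoc (tqU q G M α κ i), tq_comm q G M α κ k j]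
  simp only [mul_add, mul_smul_comm, Finset.mul_sum, smul_add, smul_smul, Finset.smul_sum]
  rw [← mul_assoc (tqU q G M α κ i)]
  simp only [tq_udelta q G M α κ i, tq_udelta q G M α κ k, smul_smul, Finset.smul_sum]
  simp only [add_smul, Finset.sum_add_distrib, mul_comm, mul_left_comm, mul_assoc]
  abel

lemma tq_key (i j k : Fin n) :
    ∑ g' : G, ∑ m' : Fin n,
      (κ g' k j * (M g' i m' - q j i * q k i * (if m' = i then (1:ℂ) else 0)) +
       κ g' k i * (q k j * (if m' = j then (1:ℂ) else 0) - q j i * M g' j m') +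
       κ g' j i * (q k j * q k i * M g' k m' - (if m' = k then (1:ℂ) else 0))) •
        (U m' * T g') = 0 := by
  have h2 := tq_expand2 q G M α κ i j k
  have h1 := tq_expand1 q G M α κ i j k
  have hS := add_left_cancel (h2.symm.trans ((mul_assoc _ _ _).trans h1))
  calc ∑ g' : G, ∑ m' : Fin n,
      (κ g' k j * (M g' i m' - q j i * q k i * (if m' = i then (1:ℂ) else 0)) +
       κ g' k i * (q k j * (if m' = j then (1:ℂ) else 0) - q j i * M g' j m') +
       κ g' j i * (q k j * q k i * M g' k m' - (if m' = k then (1:ℂ) else 0))) •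
        (U m' * T g')
      = ∑ g' : G, ∑ m' : Fin n,
          ((q k j * q k i * κ g' j i * M g' k m' +
            q k j * κ g' k i * (if m' = j then (1:ℂ) else 0) +
            κ g' k j * M g' i m') -
           (q j i * q k i * κ g' k j * (if m' = i then (1:ℂ) else 0) +
            q j i * κ g' k i * M g' j m' +
            κ g' j i * (if m' = k then (1:ℂ) else 0))) • (U m' * T g') := by
        refine Finset.sum_congr rfl fun g' _ => Finset.sum_congr rfl fun m' _ => ?_
        congr 1
        ring
    _ = (∑ g' : G, ∑ m' : Fin n,
          (q k j * q k i * κ g' j i * M g' k m' +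
            q k j * κ g' k i * (if m' = j then (1:ℂ) else 0) +
            κ g' k j * M g' i m') • (U m' * T g')) -
        ∑ g' : G, ∑ m' : Fin n,
          (q j i * q k i * κ g' k j * (if m' = i then (1:ℂ) else 0) +
            q j i * κ g' k i * M g' j m' +
            κ g' j i * (if m' = k then (1:ℂ) else 0)) • (U m' * T g') := by
        rw [← Finset.sum_sub_distrib]
        refine Finset.sum_congr rfl fun g' _ => ?_
        rw [← Finset.sum_sub_distrib]
        refine Finset.sum_congr rfl fun m' _ => ?_
        exact sub_smul (R := ℂ) (M := TQDH n q G M α κ) _ _ _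
    _ = 0 := by rw [hS, sub_self]

end Aux

/-- Theorem (PBW ⇒ condition (2)): if `{v_1^{m_1}⋯v_n^{m_n} t_g}` is a `ℂ`-basis of
`H`, then for all `g ∈ G` and `i < j < k`, the identity
`κ_g(v_k,v_j)(g·v_i − q_{ji}q_{ki} v_i) + κ_g(v_k,v_i)(q_{kj} v_j − q_{ji} g·v_j)
  + κ_g(v_j,v_i)(q_{kj}q_{ki} g·v_k − v_k) = 0`
holds in `V`; stated here componentwise in the basis `v_m`, using
`g·v_i = ∑_m M g i m • v_m`. -/
theorem stmt17 (n : ℕ) (q : Fin n → Fin n → ℂ)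
    (hq0 : ∀ i j, q i j ≠ 0) (hq1 : ∀ i, q i i = 1)
    (hqinv : ∀ i j, q j i = (q i j)⁻¹)
    (G : Type) [Group G] [Fintype G] (M : G → Fin n → Fin n → ℂ)
    (hM1 : ∀ i k : Fin n, M 1 i k = if i = k then 1 else 0)
    (hMmul : ∀ (g h : G) (i k : Fin n), M (g * h) i k = ∑ j, M h i j * M g j k)
    (hSq : ∀ (g : G) (i j : Fin n),
      (∑ k, M g i k • sqGen q k) * (∑ l, M g j l • sqGen q l) =
        q i j • ((∑ k, M g j k • sqGen q k) * (∑ l, M g i l • sqGen q l)))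
    (α : G → G → ℂˣ)
    (hcoc : ∀ g₁ g₂ g₃ : G, α g₁ g₂ * α (g₁ * g₂) g₃ = α g₂ g₃ * α g₁ (g₂ * g₃))
    (hnorm : ∀ g : G, α g 1 = 1 ∧ α 1 g = 1)
    (κ : G → Fin n → Fin n → ℂ)
    (hκ : ∀ (g : G) (i j : Fin n), κ g i j = -(q i j) * κ g j i)
    (hPBW : LinearIndependent ℂ
        (fun p : (Fin n → ℕ) × G => tqMono n q G M α κ p.1 p.2) ∧
      Submodule.span ℂ
        (Set.range fun p : (Fin n → ℕ) × G => tqMono n q G M α κ p.1 p.2) = ⊤)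
    (g : G) (i j k : Fin n) (hij : i < j) (hjk : j < k) (m : Fin n) :
    κ g k j * (M g i m - q j i * q k i * (if m = i then 1 else 0)) +
      κ g k i * (q k j * (if m = j then 1 else 0) - q j i * M g j m) +
      κ g j i * (q k j * q k i * M g k m - (if m = k then 1 else 0)) = 0 := by
  classical
  set c : Fin n × G → ℂ := fun p =>
    κ p.2 k j * (M p.2 i p.1 - q j i * q k i * (if p.1 = i then 1 else 0)) +
      κ p.2 k i * (q k j * (if p.1 = j then 1 else 0) - q j i * M p.2 j p.1) +
      κ p.2 j i * (q k j * q k i * M p.2 k p.1 - (if p.1 = k then 1 else 0)) with hc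
  have hφinj : Function.Injective
      (fun p : Fin n × G => ((Pi.single p.1 1 : Fin n → ℕ), p.2)) := by
    intro p₁ p₂ h
    simp only [Prod.mk.injEq] at h
    obtain ⟨h1, h2⟩ := h
    have h3 : p₁.1 = p₂.1 := by
      by_contra hne
      have := congrFun h1 p₁.1
      simp [Pi.single_apply, hne] at this
    exact Prod.ext h3 h2
  have hli := hPBW.1.comp _ hφinj
  have hsum : ∑ p : Fin n × G, c p •
      tqMono n q G M α κ (Pi.single p.1 1) p.2 = 0 := by
    have hkey := tq_key q G M α κ i j k
    rw [Fintype.sum_prod_type]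
    rw [Finset.sum_comm]
    simpa only [tq_mono_single, hc] using hkey
  have := Fintype.linearIndependent_iff.mp hli c (by simpa using hsum) (m, g)
  simpa [hc] using this
end

section
/- Let G act diagonally on V, i.e., g·v_i = λ_{g,i} v_i for scalars λ_{g,i} ∈ C^×, and let α be a normalized 2-cocycle on G. Fix a ∈ G and indices r < s, and suppose λ_{h,r} λ_{h,s} = α(h,a)/α(a,h) for all h in the centralizer C_G(a). Then the function sending a coset gC_G(a) to the scalar (α(g,a)/α(gag^{-1},g)) · λ_{g,r}^{-1} λ_{g,s}^{-1} is well defined, i.e., independent of the choice of representative g. -/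
/-- Let `G` act diagonally on `V` (basis indexed by `Fin n`) with eigenvalues
`lam g i` (so `lam` is multiplicative in `g`), let `α` be a normalized 2-cocycle
on `G`, and fix `a ∈ G` and `r < s` such that `lam h r · lam h s = α(h,a)/α(a,h)`
for all `h ∈ C_G(a)`. Then `g ↦ (α(g,a)/α(gag⁻¹,g)) · lam g r⁻¹ · lam g s⁻¹` is
independent of the choice of representative of the coset `g C_G(a)`. -/
theorem stmt18 (G : Type) [Group G] (n : ℕ) (lam : G → Fin n → ℂˣ)
    (hlam : ∀ (g h : G) (i : Fin n), lam (g * h) i = lam g i * lam h i)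
    (α : G → G → ℂˣ)
    (hcoc : ∀ g₁ g₂ g₃ : G, α g₁ g₂ * α (g₁ * g₂) g₃ = α g₂ g₃ * α g₁ (g₂ * g₃))
    (hnorm : ∀ g : G, α g 1 = 1 ∧ α 1 g = 1)
    (a : G) (r s : Fin n) (hrs : r < s)
    (hcent : ∀ h : G, h * a = a * h → lam h r * lam h s = α h a / α a h) :
    ∀ g h : G, h * a = a * h →
      α (g * h) a / α (g * a * g⁻¹) (g * h) * (lam (g * h) r)⁻¹ * (lam (g * h) s)⁻¹ =
        α g a / α (g * a * g⁻¹) g * (lam g r)⁻¹ * (lam g s)⁻¹ := by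
  intro g h hah
  have e1 := hcoc g h a
  rw [hah] at e1
  have e2 := hcoc g a h
  have e3 := hcoc (g * a * g⁻¹) g h
  rw [show g * a * g⁻¹ * g = g * a from by group] at e3
  have hc := hcent h hah
  rw [hlam, hlam]
  rw [Units.ext_iff] at e1 e2 e3 hc ⊢
  push_cast at e1 e2 e3 hc ⊢
  set A := (α (g * h) a : ℂ)
  set B := (α g a : ℂ)
  set C := (α (g * a) h : ℂ)
  set D := (α a h : ℂ)
  set H := (α h a : ℂ)
  set P := (α g h : ℂ)
  set Q := (α g (a * h) : ℂ)
  set X1 := (α (g * a * g⁻¹) (g * h) : ℂ)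
  set X2 := (α (g * a * g⁻¹) g : ℂ)
  have key : A * X2 * D = X1 * H * B := by
    refine mul_right_cancel₀ (b := C * Q * P)
      (by simp [C, Q, P, mul_ne_zero, Units.ne_zero]) ?_
    linear_combination (X2*C)*(D*Q)*e1 + (H*Q)*(D*Q)*e3 - (H*Q)*(P*X1)*e2
  have hD : D ≠ 0 := Units.ne_zero _
  have hH : H ≠ 0 := Units.ne_zero _
  have hX1 : X1 ≠ 0 := Units.ne_zero _
  have hX2 : X2 ≠ 0 := Units.ne_zero _
  field_simp at hc ⊢
  simp only [div_eq_mul_inv] at *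
  refine mul_right_cancel₀ hD ?_
  linear_combination key - (X1 * B) * hc
end
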